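/- arXiv:2605.14256 — 5 statements merged into one kernel-verified Lean document; each statement's English description precedes it below -/
import Mathlib

section
/- Fix n ≥ 1. For a function g : {0,1,…,n} → ℝ define the averaged operator Ω̄_g := 3^{−n} · Σ_{c ∈ {1,2,3}^n} Σ_{s,t ∈ {0,1}^n} g(D(s,t)) · (⊗_{ℓ=1}^n |e_{c_ℓ}(s_ℓ)⟩⟨e_{c_ℓ}(s_ℓ)|) ⊗ (⊗_{ℓ=1}^n |e_{c_ℓ}(t_ℓ)⟩⟨e_{c_ℓ}(t_ℓ)|), an operator on (ℂ²)^{⊗n} ⊗ (ℂ²)^{⊗n}. Then Ω̄_g equals the full swap operator F exchanging the two n-qubit tensor copies if and only if g(d) = (−1)^d · 2^{n−d} for every d ∈ {0,1,…,n}. -/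
open Matrix BigOperators
open scoped ComplexOrder

noncomputable section

abbrev QIdx (n : ℕ) := Fin n → Fin 2

def IsDensity {ι : Type*} [Fintype ι] [DecidableEq ι] (ρ : Matrix ι ι ℂ) : Prop :=
  ρ.PosSemidef ∧ ρ.trace = 1

/-- The operator on `(ℂ²)^{⊗k}` permuting the `k` tensor factors according to `π`. -/
def permOp {k : ℕ} (π : Equiv.Perm (Fin k)) : Matrix (Fin k → Fin 2) (Fin k → Fin 2) ℂ :=
  fun a b => if ∀ i, b i = a (π i) then 1 else 0

def pauliX : Matrix (Fin 2) (Fin 2) ℂ := !![0, 1; 1, 0]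
def pauliY : Matrix (Fin 2) (Fin 2) ℂ := !![0, -Complex.I; Complex.I, 0]
def pauliZ : Matrix (Fin 2) (Fin 2) ℂ := !![1, 0; 0, -1]

/-- `P^{⊗k}` on `(ℂ²)^{⊗k}`. -/
def pauliPow (k : ℕ) (P : Matrix (Fin 2) (Fin 2) ℂ) :
    Matrix (Fin k → Fin 2) (Fin k → Fin 2) ℂ :=
  fun a b => ∏ i, P (a i) (b i)

/-- The single-qubit Clifford fourth-moment operator `R_{4,Cl}` on `(ℂ²)^{⊗4}`. -/
def R4Cl : Matrix (Fin 4 → Fin 2) (Fin 4 → Fin 2) ℂ :=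
  -1 + ((1 : ℂ)/2) • (permOp (Equiv.swap 0 1) + permOp (Equiv.swap 2 3))
    + ((3 : ℂ)/4) • (1 + pauliPow 4 pauliX + pauliPow 4 pauliY + pauliPow 4 pauliZ)

/-- The single-qubit Haar fourth-moment operator `R_{4,H}` on `(ℂ²)^{⊗4}`. -/
def R4H : Matrix (Fin 4 → Fin 2) (Fin 4 → Fin 2) ℂ :=
  ((1 : ℂ)/5) • (1 + permOp (Equiv.swap 0 1) + permOp (Equiv.swap 2 3))
  + ((3 : ℂ)/5) • (permOp (Equiv.swap 0 1 * Equiv.swap 2 3)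
      + permOp (Equiv.swap 0 2 * Equiv.swap 1 3)
      + permOp (Equiv.swap 0 3 * Equiv.swap 1 2))
  - ((3 : ℂ)/10) • (permOp (Equiv.swap 0 2) + permOp (Equiv.swap 1 3)
      + permOp (Equiv.swap 0 3) + permOp (Equiv.swap 1 2))

/-- Per-qubit `n`-fold tensor power of an operator on `(ℂ²)^{⊗k}` (k replicas),
acting on `k` copies of `(ℂ²)^{⊗n}`. -/
def repPow (n : ℕ) {k : ℕ} (R : Matrix (Fin k → Fin 2) (Fin k → Fin 2) ℂ) :
    Matrix (Fin k → QIdx n) (Fin k → QIdx n) ℂ :=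
  fun a b => ∏ ℓ : Fin n, R (fun r => a r ℓ) (fun r => b r ℓ)

/-- The four-replica state `ρ ⊗ σ ⊗ ρ ⊗ σ`. -/
def rep4 {n : ℕ} (ρ σ : Matrix (QIdx n) (QIdx n) ℂ) :
    Matrix (Fin 4 → QIdx n) (Fin 4 → QIdx n) ℂ :=
  fun a b => ρ (a 0) (b 0) * σ (a 1) (b 1) * ρ (a 2) (b 2) * σ (a 3) (b 3)

/-- The pure state `|ψ⟩⟨ψ|`. -/
def pureState {ι : Type*} (ψ : ι → ℂ) : Matrix ι ι ℂ :=
  fun a b => ψ a * star (ψ b)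


/-- The three single-qubit Pauli measurement bases: `e 0` is the `X` basis `{|+⟩,|−⟩}`,
`e 1` the `Y` basis `{|i+⟩,|i−⟩}`, and `e 2` the `Z` basis `{|0⟩,|1⟩}`. -/
def pauliBasis : Fin 3 → Fin 2 → (Fin 2 → ℂ)
  | 0, 0 => ![1 / (Real.sqrt 2 : ℂ), 1 / (Real.sqrt 2 : ℂ)]
  | 0, 1 => ![1 / (Real.sqrt 2 : ℂ), -(1 / (Real.sqrt 2 : ℂ))]
  | 1, 0 => ![1 / (Real.sqrt 2 : ℂ), Complex.I / (Real.sqrt 2 : ℂ)]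
  | 1, 1 => ![1 / (Real.sqrt 2 : ℂ), -(Complex.I / (Real.sqrt 2 : ℂ))]
  | 2, 0 => ![1, 0]
  | 2, 1 => ![0, 1]

/-- The averaged operator `Ω̄_g` on `(ℂ²)^{⊗n} ⊗ (ℂ²)^{⊗n}` associated with a
Hamming-distance kernel `g`: the average over uniformly random local Pauli bases
`c ∈ {1,2,3}^n` of `Σ_{s,t} g(D(s,t)) |e_c(s)⟩⟨e_c(s)| ⊗ |e_c(t)⟩⟨e_c(t)|`. -/
def avgOp (n : ℕ) (g : ℕ → ℝ) :
    Matrix (QIdx n × QIdx n) (QIdx n × QIdx n) ℂ :=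
  fun p q => (1 / (3 : ℂ)^n) *
    ∑ c : Fin n → Fin 3, ∑ s : QIdx n, ∑ t : QIdx n,
      (g (hammingDist s t) : ℂ)
        * (∏ ℓ, pureState (pauliBasis (c ℓ) (s ℓ)) (p.1 ℓ) (q.1 ℓ))
        * (∏ ℓ, pureState (pauliBasis (c ℓ) (t ℓ)) (p.2 ℓ) (q.2 ℓ))

/-- The full swap operator `F` on `(ℂ²)^{⊗n} ⊗ (ℂ²)^{⊗n}`, exchanging the two `n`-qubit
tensor copies: `F(u ⊗ v) = v ⊗ u`. -/
def swapOp (n : ℕ) : Matrix (QIdx n × QIdx n) (QIdx n × QIdx n) ℂ :=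
  fun p q => if q = (p.2, p.1) then 1 else 0

open scoped Kronecker

/-!
Put `t = s + u`: since `D(s, s + u) = |u|`, the average factorises over the qubits as
`Ω̄_g = Σ_u g(|u|) ⊗_ℓ N(u_ℓ)`, where on one pair of qubits `N(0) = (1 + F₁)/3` and
`N(1) = (2 − F₁)/3`. Hence `F₁ = 2 N(0) − N(1)`, and expanding `F = F₁^{⊗n}` produces exactly
the kernel `(−1)^d 2^{n−d}`. Conversely the `2^n` operators `⊗_ℓ N(u_ℓ)` are linearly
independent, so `Ω̄_g` determines `g` on `{0, …, n}`.
-/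

namespace Matrix

variable {ι κ κ' κ'' R : Type*} [Fintype ι] [CommSemiring R]

def piKron (A : ι → Matrix κ κ' R) : Matrix (ι → κ) (ι → κ') R :=
  fun v w => ∏ i, A i (v i) (w i)

theorem piKron_apply (A : ι → Matrix κ κ' R) (v : ι → κ) (w : ι → κ') :
    piKron A v w = ∏ i, A i (v i) (w i) := rfl

theorem piKron_mul [DecidableEq ι] [Fintype κ'] (A : ι → Matrix κ κ' R)
    (B : ι → Matrix κ' κ'' R) : piKron A * piKron B = piKron fun i => A i * B i := by
  ext v w
  simp only [mul_apply, piKron_apply, ← Finset.prod_mul_distrib, Fintype.prod_sum]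

theorem piKron_one [DecidableEq ι] [DecidableEq κ] :
    piKron (fun _ : ι => (1 : Matrix κ κ R)) = 1 := by
  ext v w
  simp only [piKron_apply, one_apply, Fintype.prod_boole, funext_iff]

theorem piKron_smul (c : ι → R) (A : ι → Matrix κ κ' R) :
    piKron (fun i => c i • A i) = (∏ i, c i) • piKron A := by
  ext v w
  simp only [piKron_apply, smul_apply, smul_eq_mul, Finset.prod_mul_distrib]

theorem piKron_sum [DecidableEq ι] {E : Type*} [Fintype E] (A : ι → E → Matrix κ κ' R) :
    piKron (fun i => ∑ e, A i e) = ∑ u : ι → E, piKron fun i => A i (u i) := by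
  ext v w
  simp only [piKron_apply, sum_apply, Fintype.prod_sum]

theorem piKron_mulVec_injective [DecidableEq ι] [Fintype κ] [DecidableEq κ]
    {A B : Matrix κ κ R} (h : A * B = 1) : Function.Injective (piKron (fun _ : ι => B) *ᵥ ·) := by
  intro x y hxy
  have hAB : piKron (fun _ : ι => A) * piKron (fun _ => B) = 1 := by
    rw [piKron_mul, h, piKron_one]
  simpa [mulVec_mulVec, hAB] using congrArg (piKron (fun _ : ι => A) *ᵥ ·) hxy

end Matrix

theorem hammingDist_self_add {ι : Type*} [Fintype ι] {β : ι → Type*} [∀ i, AddGroup (β i)]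
    [∀ i, DecidableEq (β i)] (x y : ∀ i, β i) : hammingDist x (x + y) = hammingNorm y := by
  rw [hammingDist_eq_hammingNorm, neg_add_cancel_left]

theorem prod_ite_eq_zero_eq_pow_hammingNorm {ι β M : Type*} [Fintype ι] [Zero β]
    [DecidableEq β] [CommMonoid M] (u : ι → β) (a b : M) :
    ∏ i, (if u i = 0 then a else b) =
      b ^ hammingNorm u * a ^ (Fintype.card ι - hammingNorm u) := by
  have hcard : (Finset.univ.filter fun i => u i = 0).card = Fintype.card ι - hammingNorm u := by
    have := Finset.card_filter_add_card_filter_not (s := Finset.univ) (p := fun i => u i = 0)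
    rw [Finset.card_univ] at this
    simp only [hammingNorm, ne_eq]
    omega
  rw [Finset.prod_ite, Finset.prod_const, Finset.prod_const, hcard, hammingNorm, mul_comm]

theorem exists_hammingNorm_eq {ι β : Type*} [Fintype ι] [Zero β] [One β] [NeZero (1 : β)]
    [DecidableEq β] {d : ℕ} (hd : d ≤ Fintype.card ι) : ∃ u : ι → β, hammingNorm u = d := by
  classical
  obtain ⟨s, -, hs⟩ := Finset.exists_subset_card_eq (s := Finset.univ) hd
  refine ⟨fun i => if i ∈ s then 1 else 0, ?_⟩
  simp [hammingNorm, hs]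

theorem pureState_pauliBasis (c : Fin 3) (s : Fin 2) :
    pureState (pauliBasis c s) =
      (1 / 2 : ℂ) • (1 + (-1) ^ (s : ℕ) • ![pauliX, pauliY, pauliZ] c) := by
  have h : ((Real.sqrt 2 : ℝ) : ℂ) ^ 2 = 2 := by
    rw [← Complex.ofReal_pow, Real.sq_sqrt zero_le_two]; norm_num
  ext i j
  fin_cases c <;> fin_cases s <;> fin_cases i <;> fin_cases j <;>
    simp [pureState, pauliBasis, pauliX, pauliY, pauliZ, Complex.conj_ofReal] <;>
    field_simp <;> ring_nf <;> simp only [h, Complex.I_sq] <;> ring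

def qubitSwap : Matrix (Fin 2 × Fin 2) (Fin 2 × Fin 2) ℂ :=
  fun x y => if y = x.swap then 1 else 0

/-- `N(e)`: the factor of `Ω̄_g` on one pair of qubits whose two outcomes differ by `e`. -/
def pauliPairAvg (e : Fin 2) : Matrix (Fin 2 × Fin 2) (Fin 2 × Fin 2) ℂ :=
  (1 / 3 : ℂ) • ∑ c : Fin 3, ∑ s : Fin 2,
    pureState (pauliBasis c s) ⊗ₖ pureState (pauliBasis c (s + e))

theorem pauliPairAvg_eq (e : Fin 2) :
    pauliPairAvg e = (![1 / 3, 2 / 3] e : ℂ) • 1 + (![1 / 3, -1 / 3] e : ℂ) • qubitSwap := by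
  simp only [pauliPairAvg, pureState_pauliBasis]
  ext ⟨a, b⟩ ⟨c, d⟩
  fin_cases e <;> fin_cases a <;> fin_cases b <;> fin_cases c <;> fin_cases d <;>
    simp [Fin.sum_univ_three, qubitSwap, pauliX, pauliY, pauliZ, one_apply] <;>
    ring_nf <;> simp <;> ring

theorem sum_smul_pauliPairAvg :
    ∑ e : Fin 2, (if e = 0 then (2 : ℂ) else -1) • pauliPairAvg e = qubitSwap := by
  simp only [Fin.sum_univ_two, pauliPairAvg_eq, cons_val_zero, cons_val_one, cons_val_fin_one,
    reduceIte, one_ne_zero]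
  module

theorem pauliPairAvg_apply_zero_one (b e : Fin 2) :
    pauliPairAvg e (0, 1) (b, b + 1) = !![1 / 3, 2 / 3; 1 / 3, -1 / 3] b e := by
  rw [pauliPairAvg_eq]
  fin_cases b <;> fin_cases e <;> simp [qubitSwap, one_apply]

theorem linearIndependent_piKron_pauliPairAvg (ι : Type*) [Fintype ι] [DecidableEq ι] :
    LinearIndependent ℂ fun u : ι → Fin 2 => piKron fun i => pauliPairAvg (u i) := by
  rw [Fintype.linearIndependent_iff]
  intro δ hδ
  have hinv : !![1, 2; 1, -1] * !![1 / 3, 2 / 3; 1 / 3, -1 / 3] =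
      (1 : Matrix (Fin 2) (Fin 2) ℂ) := by
    ext i j
    fin_cases i <;> fin_cases j <;> simp [mul_apply, Fin.sum_univ_two] <;> norm_num
  -- The entries in row `(0,1)^ι` and columns `(v, v + 1)` already form an invertible system.
  have hrow : piKron (fun _ : ι => !![1 / 3, 2 / 3; 1 / 3, -1 / 3]) *ᵥ δ = 0 := by
    ext v
    have := congrFun (congrFun hδ fun _ => (0, 1)) fun i => (v i, v i + 1)
    simpa [Matrix.sum_apply, piKron_apply, pauliPairAvg_apply_zero_one, mulVec, dotProduct,
      mul_comm] using this
  exact congrFun (piKron_mulVec_injective hinv (hrow.trans (mulVec_zero _).symm))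

/-- The identification `(ℂ² ⊗ ℂ²)^{⊗n} ≅ (ℂ²)^{⊗n} ⊗ (ℂ²)^{⊗n}` on operators. -/
def regroup (n : ℕ) :
    Matrix (Fin n → Fin 2 × Fin 2) (Fin n → Fin 2 × Fin 2) ℂ ≃
      Matrix (QIdx n × QIdx n) (QIdx n × QIdx n) ℂ :=
  reindex (Equiv.arrowProdEquivProdArrow _ _ _) (Equiv.arrowProdEquivProdArrow _ _ _)

theorem regroup_apply {n : ℕ} (A : Matrix (Fin n → Fin 2 × Fin 2) (Fin n → Fin 2 × Fin 2) ℂ)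
    (p q : QIdx n × QIdx n) :
    regroup n A p q = A (fun ℓ => (p.1 ℓ, p.2 ℓ)) (fun ℓ => (q.1 ℓ, q.2 ℓ)) := rfl

theorem avgOp_eq_regroup (n : ℕ) (g : ℕ → ℝ) :
    avgOp n g = regroup n
      (∑ u : QIdx n, (g (hammingNorm u) : ℂ) • piKron fun ℓ => pauliPairAvg (u ℓ)) := by
  ext p q
  have hshift (c : Fin n → Fin 3) (s : QIdx n) : ∑ t : QIdx n, (g (hammingDist s t) : ℂ) *
        (∏ ℓ, pureState (pauliBasis (c ℓ) (s ℓ)) (p.1 ℓ) (q.1 ℓ)) *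
          ∏ ℓ, pureState (pauliBasis (c ℓ) (t ℓ)) (p.2 ℓ) (q.2 ℓ) =
      ∑ u : QIdx n, (g (hammingNorm u) : ℂ) * ∏ ℓ, (pureState (pauliBasis (c ℓ) (s ℓ)) ⊗ₖ
        pureState (pauliBasis (c ℓ) (s ℓ + u ℓ))) (p.1 ℓ, p.2 ℓ) (q.1 ℓ, q.2 ℓ) := by
    refine (Fintype.sum_equiv (Equiv.addLeft s) _ _ fun u => ?_).symm
    simp only [Equiv.coe_addLeft, hammingDist_self_add, Pi.add_apply, kronecker_apply,
      Finset.prod_mul_distrib, mul_assoc]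
  have hfactor (u : QIdx n) : 1 / 3 ^ n * ∑ c : Fin n → Fin 3, ∑ s : QIdx n,
        ∏ ℓ, (pureState (pauliBasis (c ℓ) (s ℓ)) ⊗ₖ
          pureState (pauliBasis (c ℓ) (s ℓ + u ℓ))) (p.1 ℓ, p.2 ℓ) (q.1 ℓ, q.2 ℓ) =
      ∏ ℓ, pauliPairAvg (u ℓ) (p.1 ℓ, p.2 ℓ) (q.1 ℓ, q.2 ℓ) := by
    simp only [pauliPairAvg, Matrix.smul_apply, Matrix.sum_apply, smul_eq_mul,
      Finset.prod_mul_distrib, Finset.prod_const, Finset.card_univ, Fintype.card_fin,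
      Fintype.prod_sum, one_div, inv_pow]
  simp only [avgOp, regroup_apply, Matrix.sum_apply, Matrix.smul_apply, piKron_apply, smul_eq_mul,
    hshift, ← hfactor, Finset.mul_sum]
  refine (Finset.sum_congr rfl fun c _ => Finset.sum_comm).trans (Finset.sum_comm.trans ?_)
  exact Finset.sum_congr rfl fun _ _ => Finset.sum_congr rfl fun _ _ =>
    Finset.sum_congr rfl fun _ _ => mul_left_comm _ _ _

theorem swapOp_eq_regroup (n : ℕ) : swapOp n = regroup n (piKron fun _ => qubitSwap) := by
  ext p q
  simp only [swapOp, regroup_apply, piKron_apply, qubitSwap, Prod.swap, Fintype.prod_boole,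
    Prod.ext_iff, funext_iff, forall_and]

theorem piKron_qubitSwap_eq_sum (n : ℕ) : piKron (fun _ : Fin n => qubitSwap) =
    ∑ u : QIdx n, ((-1) ^ hammingNorm u * 2 ^ (n - hammingNorm u) : ℂ) •
      piKron fun ℓ => pauliPairAvg (u ℓ) := by
  simp only [← sum_smul_pauliPairAvg, piKron_sum, piKron_smul,
    prod_ite_eq_zero_eq_pow_hammingNorm, Fintype.card_fin]

theorem avgOp_neg_one_pow_mul_two_pow (n : ℕ) :
    avgOp n (fun d => (-1) ^ d * 2 ^ (n - d)) = swapOp n := by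
  rw [avgOp_eq_regroup, swapOp_eq_regroup, piKron_qubitSwap_eq_sum]
  push_cast
  rfl

theorem avgOp_eq_avgOp_iff (n : ℕ) (g g' : ℕ → ℝ) :
    avgOp n g = avgOp n g' ↔ ∀ d ≤ n, g d = g' d := by
  refine ⟨fun h d hd => ?_, fun h => ?_⟩
  · obtain ⟨u, rfl⟩ := exists_hammingNorm_eq (β := Fin 2) (hd.trans_eq (Fintype.card_fin n).symm)
    rw [avgOp_eq_regroup, avgOp_eq_regroup] at h
    have := (Fintype.linearIndependent_iffₛ.mp (linearIndependent_piKron_pauliPairAvg (Fin n)) _ _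
      ((regroup n).injective h)) u
    exact_mod_cast this
  · simp only [avgOp_eq_regroup]
    congr! 3 with u
    rw [h _ (hammingNorm_le_card_fintype.trans_eq (Fintype.card_fin n))]

theorem unique_unbiased_hamming_kernel_general (n : ℕ) (g : ℕ → ℝ) :
    avgOp n g = swapOp n ↔ ∀ d ≤ n, g d = (-1 : ℝ)^d * 2^(n - d) := by
  rw [← avgOp_neg_one_pow_mul_two_pow, avgOp_eq_avgOp_iff]

/-- For `n ≥ 1`, the averaged operator `Ω̄_g` of a Hamming-distance
kernel equals the full swap operator if and only if `g(d) = (−1)^d 2^{n−d}` for all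
`0 ≤ d ≤ n`. -/
theorem unique_unbiased_hamming_kernel (n : ℕ) (hn : 1 ≤ n) (g : ℕ → ℝ) :
    avgOp n g = swapOp n ↔ ∀ d ≤ n, g d = (-1 : ℝ)^d * 2^(n - d) :=
  unique_unbiased_hamming_kernel_general n g
end
end

section
/- For every unit vector ψ ∈ ℂ², tr[R_{4,H} (|ψ⟩⟨ψ|)^{⊗4}] = 6/5. Consequently, for every pure product state ψ = ψ₁ ⊗ ⋯ ⊗ ψₙ with each ψ_ℓ ∈ ℂ² a unit vector, tr[R_{4,H}^{⊗n}(|ψ⟩⟨ψ|)^{⊗4}] = (6/5)^n. In particular 6/5 < 3/2, so the bound (3/2)^n is not attained by product states. -/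
open Matrix BigOperators
open scoped ComplexOrder

noncomputable section

lemma sum_pi_prod {n : ℕ} {β : Type*} [Fintype β] [DecidableEq β] (H : Fin n → β → ℂ) :
    ∑ a : Fin n → β, ∏ ℓ, H ℓ (a ℓ) = ∏ ℓ, ∑ u, H ℓ u := by
  rw [Finset.prod_univ_sum]
  rw [Fintype.piFinset_univ]

lemma trace_permOp_pure {k : ℕ} (π : Equiv.Perm (Fin k)) (ψ : Fin 2 → ℂ)
    (h : ∑ i, ψ i * star (ψ i) = 1) :
    Matrix.trace (permOp π * pureState (fun a : Fin k → Fin 2 => ∏ i, ψ (a i))) = 1 := by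
  classical
  have step : ∀ a : Fin k → Fin 2,
      (permOp π * pureState (fun c : Fin k → Fin 2 => ∏ i, ψ (c i))) a a
        = ∏ i, (ψ (a i) * star (ψ (a i))) := by
    intro a
    rw [Matrix.mul_apply]
    have h1 : ∀ b : Fin k → Fin 2,
        permOp π a b * pureState (fun c : Fin k → Fin 2 => ∏ i, ψ (c i)) b a
        = if b = (fun i => a (π i)) then
            pureState (fun c : Fin k → Fin 2 => ∏ i, ψ (c i)) b a else 0 := by
      intro b
      simp only [permOp, funext_iff]
      split <;> simp
    rw [Finset.sum_congr rfl (fun b _ => h1 b), Finset.sum_ite_eq' Finset.univ]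
    simp only [Finset.mem_univ, if_true, pureState]
    have h2 : (∏ i, ψ (a (π i))) = ∏ i, ψ (a i) := Equiv.prod_comp π (fun i => ψ (a i))
    rw [h2, star_prod, ← Finset.prod_mul_distrib]
  rw [Matrix.trace]
  simp only [Matrix.diag]
  rw [Finset.sum_congr rfl (fun a _ => step a)]
  rw [sum_pi_prod (fun _ u => ψ u * star (ψ u))]
  rw [Finset.prod_const, Finset.card_univ, Fintype.card_fin, h, one_pow]

lemma one_eq_permOp {k : ℕ} : (1 : Matrix (Fin k → Fin 2) (Fin k → Fin 2) ℂ) = permOp 1 := by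
  ext a b
  simp [permOp, Matrix.one_apply, funext_iff, eq_comm]

lemma trace_R4H_pure (ψ : Fin 2 → ℂ) (h : ∑ i, ψ i * star (ψ i) = 1) :
    Matrix.trace (R4H * pureState (fun a : Fin 4 → Fin 2 => ∏ i, ψ (a i))) = (6 : ℂ)/5 := by
  have t : ∀ π : Equiv.Perm (Fin 4),
      Matrix.trace (permOp π * pureState (fun a : Fin 4 → Fin 2 => ∏ i, ψ (a i))) = 1 :=
    fun π => trace_permOp_pure π ψ h
  simp only [R4H, one_eq_permOp, Matrix.add_mul, Matrix.sub_mul, Matrix.smul_mul,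
    Matrix.trace_add, Matrix.trace_sub, Matrix.trace_smul, t, smul_eq_mul]
  norm_num

def swapE (n : ℕ) : (Fin n → Fin 4 → Fin 2) ≃ (Fin 4 → Fin n → Fin 2) :=
  Equiv.piComm (fun (_ : Fin n) (_ : Fin 4) => Fin 2)

lemma rep4_pure_eq {n : ℕ} (ψ : Fin n → Fin 2 → ℂ) (b a : Fin 4 → QIdx n) :
    rep4 (pureState (fun s : QIdx n => ∏ ℓ, ψ ℓ (s ℓ)))
         (pureState (fun s : QIdx n => ∏ ℓ, ψ ℓ (s ℓ))) b a
      = ∏ ℓ, pureState (fun u : Fin 4 → Fin 2 => ∏ i, ψ ℓ (u i))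
          (fun r => b r ℓ) (fun r => a r ℓ) := by
  have h1 : rep4 (pureState (fun s : QIdx n => ∏ ℓ, ψ ℓ (s ℓ)))
      (pureState (fun s : QIdx n => ∏ ℓ, ψ ℓ (s ℓ))) b a
      = ∏ r : Fin 4, pureState (fun s : QIdx n => ∏ ℓ, ψ ℓ (s ℓ)) (b r) (a r) := by
    rw [Fin.prod_univ_four]; rfl
  rw [h1]
  simp only [pureState, star_prod, ← Finset.prod_mul_distrib]
  rw [Finset.prod_comm]

lemma trace_mul_sum {ι : Type*} [Fintype ι] [DecidableEq ι] (M N : Matrix ι ι ℂ) :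
    Matrix.trace (M * N) = ∑ u, ∑ v, M u v * N v u := by
  simp [Matrix.trace, Matrix.diag, Matrix.mul_apply]

lemma trace_repPow_rep4 {n : ℕ} (ψ : Fin n → Fin 2 → ℂ)
    (R : Matrix (Fin 4 → Fin 2) (Fin 4 → Fin 2) ℂ) :
    Matrix.trace (repPow n R *
        rep4 (pureState (fun s : QIdx n => ∏ ℓ, ψ ℓ (s ℓ)))
             (pureState (fun s : QIdx n => ∏ ℓ, ψ ℓ (s ℓ))))
      = ∏ ℓ, Matrix.trace (R * pureState (fun u : Fin 4 → Fin 2 => ∏ i, ψ ℓ (u i))) := by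
  classical
  set S : Fin n → Matrix (Fin 4 → Fin 2) (Fin 4 → Fin 2) ℂ :=
    fun ℓ => pureState (fun u : Fin 4 → Fin 2 => ∏ i, ψ ℓ (u i)) with hS
  rw [trace_mul_sum]
  have key : ∀ a b : Fin 4 → QIdx n,
      repPow n R a b *
        rep4 (pureState (fun s : QIdx n => ∏ ℓ, ψ ℓ (s ℓ)))
             (pureState (fun s : QIdx n => ∏ ℓ, ψ ℓ (s ℓ))) b a
      = ∏ ℓ, (R (fun r => a r ℓ) (fun r => b r ℓ) * S ℓ (fun r => b r ℓ) (fun r => a r ℓ)) := by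
    intro a b
    rw [rep4_pure_eq, repPow, ← Finset.prod_mul_distrib]
  simp only [key]
  have swapsum : ∀ F : (Fin 4 → QIdx n) → ℂ,
      ∑ a : Fin 4 → QIdx n, F a = ∑ a' : Fin n → (Fin 4 → Fin 2), F (swapE n a') :=
    fun F => (Equiv.sum_comp (swapE n) F).symm
  rw [swapsum]
  have inner : ∀ a' : Fin n → (Fin 4 → Fin 2),
      (∑ b : Fin 4 → QIdx n,
        ∏ ℓ, (R (fun r => swapE n a' r ℓ) (fun r => b r ℓ) * S ℓ (fun r => b r ℓ) (fun r => swapE n a' r ℓ)))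
      = ∏ ℓ, ∑ v, R (a' ℓ) v * S ℓ v (a' ℓ) := by
    intro a'
    rw [swapsum]
    rw [show (∑ b' : Fin n → (Fin 4 → Fin 2),
        ∏ ℓ, (R (fun r => swapE n a' r ℓ) (fun r => swapE n b' r ℓ) * S ℓ (fun r => swapE n b' r ℓ) (fun r => swapE n a' r ℓ)))
      = ∑ b' : Fin n → (Fin 4 → Fin 2), ∏ ℓ, (R (a' ℓ) (b' ℓ) * S ℓ (b' ℓ) (a' ℓ)) from rfl]
    exact sum_pi_prod (fun ℓ v => R (a' ℓ) v * S ℓ v (a' ℓ))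
  rw [Finset.sum_congr rfl (fun a' _ => inner a')]
  rw [sum_pi_prod (fun ℓ u => ∑ v, R u v * S ℓ v u)]
  exact Finset.prod_congr rfl (fun ℓ _ => (trace_mul_sum R (S ℓ)).symm)

/-- For every single-qubit unit vector `ψ`,
`tr[R_{4,H} (|ψ⟩⟨ψ|)^{⊗4}] = 6/5`; consequently every pure product state
`ψ = ψ₁ ⊗ ⋯ ⊗ ψₙ` satisfies `tr[R_{4,H}^{⊗n} (|ψ⟩⟨ψ|)^{⊗4}] = (6/5)^n`; and
`6/5 < 3/2`, so the bound `(3/2)^n` is not attained by product states. -/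
theorem haar_fourth_moment_product_states :
    (∀ ψ : Fin 2 → ℂ, (∑ i, ψ i * star (ψ i)) = 1 →
      Matrix.trace (R4H * pureState (fun a : Fin 4 → Fin 2 => ∏ i, ψ (a i)))
        = (6 : ℂ)/5) ∧
    (∀ n : ℕ, 1 ≤ n → ∀ ψ : Fin n → (Fin 2 → ℂ),
      (∀ ℓ, (∑ i, ψ ℓ i * star (ψ ℓ i)) = 1) →
      Matrix.trace (repPow n R4H *
          rep4 (pureState (fun s : QIdx n => ∏ ℓ, ψ ℓ (s ℓ)))
               (pureState (fun s : QIdx n => ∏ ℓ, ψ ℓ (s ℓ))))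
        = ((6 : ℂ)/5)^n) ∧
    (6 : ℝ)/5 < 3/2 := by
  refine ⟨fun ψ h => trace_R4H_pure ψ h, fun n hn ψ h => ?_, by norm_num⟩
  rw [trace_repPow_rep4]
  rw [Finset.prod_congr rfl (fun ℓ _ => trace_R4H_pure (ψ ℓ) (h ℓ))]
  rw [Finset.prod_const, Finset.card_univ, Fintype.card_fin]
end
end

section
/- For all density operators ρ, σ on ℂ² (2×2 positive semidefinite matrices of trace 1), one has (2 + tr[ρσ]) · tr[R_{4,H}(ρ ⊗ σ ⊗ ρ ⊗ σ)] ≤ 18/5, with equality exactly when ρ = σ is a pure state. -/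
open Matrix BigOperators
open scoped ComplexOrder

noncomputable section

/-- The four-replica single-qubit state `ρ ⊗ σ ⊗ ρ ⊗ σ` on `(ℂ²)^{⊗4}`. -/
def rep41 (ρ σ : Matrix (Fin 2) (Fin 2) ℂ) :
    Matrix (Fin 4 → Fin 2) (Fin 4 → Fin 2) ℂ :=
  fun a b => ρ (a 0) (b 0) * σ (a 1) (b 1) * ρ (a 2) (b 2) * σ (a 3) (b 3)

/-!
Every permutation operator contributes a product of traces over its cycles, so for unit-trace
`ρ, σ` the quantity `tr[R_{4,H}(ρ ⊗ σ ⊗ ρ ⊗ σ)]` is a polynomial `f(p, a, b)` in `p = tr ρσ`,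
`a = tr ρ²`, `b = tr σ²`. For qubit states `tr ρ² = 1 - 2 det ρ` with `0 ≤ 4 det ρ ≤ (tr ρ)²`,
so `1/2 ≤ a, b ≤ 1`, while `0 ≤ p` and `2p ≤ a + b` because `tr (ρ - σ)² ≥ 0`. On this region
`18/5 - (2 + p) f = 3/20 (2 + p)(1 - (2a - 1)(2b - 1)) + 1/10 (1 - p)(12p² + 34p + 32)`
is a sum of two nonnegative terms, and it vanishes only at `p = a = b = 1`, that is, when
`tr (ρ - σ)² = 0` and `det ρ = 0`: `ρ = σ` is pure.
-/

namespace Matrix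

variable {n R : Type*} [Fintype n]

theorem trace_sub_mul_sub [CommRing R] (A B : Matrix n n R) :
    ((A - B) * (A - B)).trace = (A * A).trace + (B * B).trace - 2 * (A * B).trace := by
  simp only [sub_mul, mul_sub, trace_sub, trace_mul_comm B A]
  ring

theorem trace_mul_self_fin_two [CommRing R] (A : Matrix (Fin 2) (Fin 2) R) :
    (A * A).trace = A.trace ^ 2 - 2 * A.det := by
  simp only [trace_fin_two, det_fin_two, mul_apply, Fin.sum_univ_two]
  ring

section StarOrdered

variable [CommRing R] [StarRing R] [PartialOrder R] [StarOrderedRing R]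

theorem IsHermitian.two_mul_trace_mul_le {A B : Matrix n n R} (hA : A.IsHermitian)
    (hB : B.IsHermitian) : 2 * (A * B).trace ≤ (A * A).trace + (B * B).trace := by
  have h := (posSemidef_conjTranspose_mul_self (A - B)).trace_nonneg
  rwa [(hA.sub hB).eq, trace_sub_mul_sub, sub_nonneg] at h

theorem IsHermitian.eq_of_trace_mul_self_add_eq [NoZeroDivisors R] {A B : Matrix n n R}
    (hA : A.IsHermitian) (hB : B.IsHermitian)
    (h : (A * A).trace + (B * B).trace = 2 * (A * B).trace) : A = B := by
  rw [← sub_eq_zero, ← trace_conjTranspose_mul_self_eq_zero_iff, (hA.sub hB).eq,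
    trace_sub_mul_sub, h, sub_self]

theorem IsHermitian.four_mul_det_le_trace_sq_fin_two {A : Matrix (Fin 2) (Fin 2) R}
    (hA : A.IsHermitian) : 4 * A.det ≤ A.trace ^ 2 := by
  have h00 : star (A 0 0) = A 0 0 := hA.apply 0 0
  have h11 : star (A 1 1) = A 1 1 := hA.apply 1 1
  have h10 : star (A 0 1) = A 1 0 := hA.apply 1 0
  have hdisc : A.trace ^ 2 - 4 * A.det
      = star (A 0 0 - A 1 1) * (A 0 0 - A 1 1) + star (2 * A 0 1) * (2 * A 0 1) := by
    simp only [trace_fin_two, det_fin_two, star_sub, star_mul, star_ofNat, h00, h11, h10]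
    ring
  rw [← sub_nonneg, hdisc]
  exact add_nonneg (star_mul_self_nonneg _) (star_mul_self_nonneg _)

end StarOrdered

open scoped MatrixOrder in
theorem PosSemidef.trace_mul_nonneg {𝕜 : Type*} [RCLike 𝕜] {A B : Matrix n n 𝕜}
    (hA : A.PosSemidef) (hB : B.PosSemidef) : 0 ≤ (A * B).trace := by
  classical
  obtain ⟨S, rfl⟩ := CStarAlgebra.nonneg_iff_eq_star_mul_self.mp hA.nonneg
  rw [star_eq_conjTranspose, mul_assoc, trace_mul_comm]
  exact (hB.mul_mul_conjTranspose_same S).trace_nonneg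

end Matrix

def IsPureState {ι : Type*} [Fintype ι] (ρ : Matrix ι ι ℂ) : Prop :=
  ∃ ψ : ι → ℂ, (∑ i, ψ i * star (ψ i)) = 1 ∧ ρ = pureState ψ

section PureState

variable {ι : Type*} [Fintype ι]

theorem trace_pureState (ψ : ι → ℂ) : (pureState ψ).trace = ∑ i, ψ i * star (ψ i) := rfl

theorem pureState_mul_self (ψ : ι → ℂ) :
    pureState ψ * pureState ψ = (∑ i, ψ i * star (ψ i)) • pureState ψ := by
  ext i k
  simp only [pureState, Matrix.mul_apply, Matrix.smul_apply, smul_eq_mul, Finset.sum_mul]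
  exact Finset.sum_congr rfl fun j _ => by ring

theorem IsPureState.trace_mul_self {ρ : Matrix ι ι ℂ} (hρ : IsPureState ρ) :
    (ρ * ρ).trace = 1 := by
  obtain ⟨ψ, hψ, rfl⟩ := hρ
  rw [pureState_mul_self, Matrix.trace_smul, trace_pureState, hψ, smul_eq_mul, one_mul]

end PureState

theorem Matrix.IsHermitian.eq_pureState_of_minor_eq_zero {ι : Type*} {ρ : Matrix ι ι ℂ}
    (hρ : ρ.IsHermitian) {j : ι} (hj : 0 < ρ j j) (h : ∀ i k, ρ i k * ρ j j = ρ i j * ρ j k) :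
    ρ = pureState fun i => ρ i j / (Real.sqrt (ρ j j).re : ℂ) := by
  set s : ℂ := (Real.sqrt (ρ j j).re : ℂ)
  have hs : s * star s = ρ j j := by
    rw [Complex.star_def, Complex.conj_ofReal, ← Complex.ofReal_mul,
      Real.mul_self_sqrt (Complex.pos_iff.1 hj).1.le, ← Complex.eq_re_of_ofReal_le hj.le]
  have hjj : ρ j j ≠ 0 := hj.ne'
  ext i k
  rw [pureState, star_div₀, hρ.apply j k, div_mul_div_comm, hs, ← h]
  field_simp

namespace IsDensity

variable {ρ σ : Matrix (Fin 2) (Fin 2) ℂ}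

theorem trace_mul_self_mem_fin_two (hρ : IsDensity ρ) :
    1 ≤ 2 * (ρ * ρ).trace ∧ (ρ * ρ).trace ≤ 1 := by
  have hdet : (0 : ℂ) ≤ ρ.det := hρ.1.det_nonneg
  have h4 := hρ.1.isHermitian.four_mul_det_le_trace_sq_fin_two
  rw [Matrix.trace_mul_self_fin_two, hρ.2, one_pow]
  rw [hρ.2, one_pow] at h4
  lift ρ.det to ℝ using (Complex.nonneg_iff.1 hdet).2.symm with d
  norm_cast at hdet h4 ⊢
  constructor <;> linarith

theorem isPureState_of_det_eq_zero (hρ : IsDensity ρ) (hdet : ρ.det = 0) : IsPureState ρ := by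
  obtain ⟨j, -, hj⟩ : ∃ j ∈ Finset.univ, ρ j j ≠ 0 :=
    Finset.exists_ne_zero_of_sum_ne_zero <| by
      simpa only [Matrix.trace, Matrix.diag] using hρ.2.trans_ne one_ne_zero
  have hminor : ∀ i k, ρ i k * ρ j j = ρ i j * ρ j k := by
    rw [Matrix.det_fin_two, sub_eq_zero] at hdet
    intro i k
    fin_cases j <;> fin_cases i <;> fin_cases k <;> simp [hdet, mul_comm]
  have hρψ := hρ.1.isHermitian.eq_pureState_of_minor_eq_zero
    (lt_of_le_of_ne (hρ.1.diag_nonneg (i := j)) hj.symm) hminor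
  exact ⟨_, by rw [← trace_pureState, ← hρψ, hρ.2], hρψ⟩

theorem trace_mul_self_eq_one_iff_fin_two (hρ : IsDensity ρ) :
    (ρ * ρ).trace = 1 ↔ IsPureState ρ := by
  refine ⟨fun h => hρ.isPureState_of_det_eq_zero ?_, IsPureState.trace_mul_self⟩
  rw [Matrix.trace_mul_self_fin_two, hρ.2] at h
  linear_combination -h / 2

theorem trace_mul_eq_one_iff_fin_two (hρ : IsDensity ρ) (hσ : IsDensity σ) :
    ((ρ * σ).trace = 1 ∧ (ρ * ρ).trace = 1 ∧ (σ * σ).trace = 1) ↔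
      ρ = σ ∧ IsPureState ρ := by
  constructor
  · rintro ⟨hp, ha, hb⟩
    refine ⟨hρ.1.isHermitian.eq_of_trace_mul_self_add_eq hσ.1.isHermitian ?_,
      hρ.trace_mul_self_eq_one_iff_fin_two.1 ha⟩
    rw [hp, ha, hb]
    norm_num
  · rintro ⟨rfl, hpure⟩
    have h := hpure.trace_mul_self
    exact ⟨h, h, h⟩

end IsDensity

theorem Fintype.sum_fin_succ_pi {α M : Type*} [Fintype α] [AddCommMonoid M] {n : ℕ}
    (f : (Fin (n + 1) → α) → M) : ∑ a, f a = ∑ x, ∑ a, f (Matrix.vecCons x a) := by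
  rw [← (Fin.consEquiv fun _ => α).sum_comp, Fintype.sum_prod_type]
  rfl

theorem permOp_one {k : ℕ} : permOp (1 : Equiv.Perm (Fin k)) = 1 := by
  ext a b
  simp [permOp, Matrix.one_apply, funext_iff, eq_comm]

theorem trace_permOp_mul_rep41 (π : Equiv.Perm (Fin 4)) (ρ σ : Matrix (Fin 2) (Fin 2) ℂ) :
    (permOp π * rep41 ρ σ).trace =
      ∑ a : Fin 4 → Fin 2,
        ρ (a (π 0)) (a 0) * σ (a (π 1)) (a 1) * ρ (a (π 2)) (a 2) * σ (a (π 3)) (a 3) := by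
  refine Finset.sum_congr rfl fun a _ => ?_
  rw [Matrix.diag, Matrix.mul_apply, Finset.sum_eq_single (fun i => a (π i))]
  · simp [permOp, rep41]
  · intro b _ hb
    simp [permOp, ← funext_iff, hb]
  · simp

theorem trace_R4H_mul_rep41 (ρ σ : Matrix (Fin 2) (Fin 2) ℂ) :
    (R4H * rep41 ρ σ).trace =
      (1/5) * (ρ.trace ^ 2 * σ.trace ^ 2 + 2 * (ρ * σ).trace * ρ.trace * σ.trace)
      + (3/5) * (2 * (ρ * σ).trace ^ 2 + (ρ * ρ).trace * (σ * σ).trace)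
      - (3/10) * ((ρ * ρ).trace * σ.trace ^ 2 + (σ * σ).trace * ρ.trace ^ 2
          + 2 * (ρ * σ).trace * ρ.trace * σ.trace) := by
  -- writing `1 = permOp 1` lets the identity term be expanded like the nine permutations
  simp only [R4H, ← permOp_one, add_mul, sub_mul, smul_mul_assoc, Matrix.trace_add,
    Matrix.trace_sub, Matrix.trace_smul, smul_eq_mul, trace_permOp_mul_rep41]
  simp only [Equiv.Perm.mul_apply, Equiv.Perm.one_apply, Equiv.swap_apply_def]
  simp only [Fin.reduceEq, if_true, if_false, Fintype.sum_fin_succ_pi, Fintype.sum_unique,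
    Fin.sum_univ_two, Matrix.cons_val, Matrix.trace_fin_two, Matrix.mul_apply]
  ring

/-- `tr[R_{4,H}(ρ ⊗ σ ⊗ ρ ⊗ σ)]` for unit-trace `ρ, σ`, as a polynomial in `p = tr ρσ`,
`a = tr ρ²`, `b = tr σ²`. -/
def haarValue {K : Type*} [Field K] (p a b : K) : K :=
  1 / 5 * (1 + 2 * p) + 3 / 5 * (2 * p ^ 2 + a * b) - 3 / 10 * (a + b + 2 * p)

theorem haarValue_certificate_real {p a b : ℝ} (hp : 0 ≤ p) (hpab : 2 * p ≤ a + b)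
    (ha : 1 ≤ 2 * a) (ha' : a ≤ 1) (hb : 1 ≤ 2 * b) (hb' : b ≤ 1) :
    (2 + p) * haarValue p a b ≤ 18 / 5 ∧
      ((2 + p) * haarValue p a b = 18 / 5 ↔ p = 1 ∧ a = 1 ∧ b = 1) := by
  have key : 18 / 5 - (2 + p) * haarValue p a b
      = 3 / 20 * ((2 + p) * (1 - (2 * a - 1) * (2 * b - 1)))
        + 1 / 10 * ((1 - p) * (12 * p ^ 2 + 34 * p + 32)) := by
    unfold haarValue
    ring
  have hab : (2 * a - 1) * (2 * b - 1) ≤ 1 :=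
    mul_le_one₀ (by linarith) (by linarith) (by linarith)
  have hX : 0 ≤ (2 + p) * (1 - (2 * a - 1) * (2 * b - 1)) :=
    mul_nonneg (by linarith) (by linarith)
  have hY : 0 ≤ (1 - p) * (12 * p ^ 2 + 34 * p + 32) := mul_nonneg (by linarith) (by positivity)
  refine ⟨by linarith, fun h => ?_, ?_⟩
  · have hX0 : (2 + p) * (1 - (2 * a - 1) * (2 * b - 1)) = 0 := by linarith
    have hY0 : (1 - p) * (12 * p ^ 2 + 34 * p + 32) = 0 := by linarith
    have hp1 : p = 1 := by
      have := (mul_eq_zero.1 hY0).resolve_right (by positivity)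
      linarith
    have hab1 : (2 * a - 1) * (2 * b - 1) = 1 := by
      have := (mul_eq_zero.1 hX0).resolve_left (by linarith)
      linarith
    exact ⟨hp1, by nlinarith, by nlinarith⟩
  · rintro ⟨rfl, rfl, rfl⟩
    norm_num [haarValue]

theorem haarValue_certificate {p a b : ℂ} (hp : 0 ≤ p) (hpab : 2 * p ≤ a + b)
    (ha : 1 ≤ 2 * a) (ha' : a ≤ 1) (hb : 1 ≤ 2 * b) (hb' : b ≤ 1) :
    (2 + p) * haarValue p a b ≤ 18 / 5 ∧
      ((2 + p) * haarValue p a b = 18 / 5 ↔ p = 1 ∧ a = 1 ∧ b = 1) := by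
  lift p to ℝ using (Complex.nonneg_iff.1 hp).2.symm
  lift a to ℝ using by simpa using (Complex.le_def.1 ha').2
  lift b to ℝ using by simpa using (Complex.le_def.1 hb').2
  norm_cast at hp hpab ha ha' hb hb'
  have hcast : (2 + (p : ℂ)) * haarValue (p : ℂ) a b = ((2 + p) * haarValue p a b : ℝ) := by
    simp only [haarValue]
    push_cast
    ring
  have h18 : (18 / 5 : ℂ) = ((18 / 5 : ℝ) : ℂ) := by push_cast; ring
  rw [hcast, h18, Complex.real_le_real, Complex.ofReal_inj]
  simpa only [Complex.ofReal_eq_one] using haarValue_certificate_real hp hpab ha ha' hb hb'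

/-- For all single-qubit density operators `ρ, σ`,
`(2 + tr[ρσ]) · tr[R_{4,H}(ρ ⊗ σ ⊗ ρ ⊗ σ)] ≤ 18/5`, with equality exactly when
`ρ = σ` is a pure state. -/
theorem one_qubit_haar_certificate (ρ σ : Matrix (Fin 2) (Fin 2) ℂ)
    (hρ : IsDensity ρ) (hσ : IsDensity σ) :
    (2 + Matrix.trace (ρ * σ)) * Matrix.trace (R4H * rep41 ρ σ) ≤ (18 : ℂ)/5 ∧
    ((2 + Matrix.trace (ρ * σ)) * Matrix.trace (R4H * rep41 ρ σ) = (18 : ℂ)/5 ↔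
      (ρ = σ ∧ ∃ ψ : Fin 2 → ℂ, (∑ i, ψ i * star (ψ i)) = 1 ∧ ρ = pureState ψ)) := by
  have hvalue :
      (R4H * rep41 ρ σ).trace = haarValue (ρ * σ).trace (ρ * ρ).trace (σ * σ).trace := by
    rw [trace_R4H_mul_rep41, hρ.2, hσ.2, haarValue]
    ring
  obtain ⟨ha, ha'⟩ := hρ.trace_mul_self_mem_fin_two
  obtain ⟨hb, hb'⟩ := hσ.trace_mul_self_mem_fin_two
  have h := haarValue_certificate (hρ.1.trace_mul_nonneg hσ.1)
    (hρ.1.isHermitian.two_mul_trace_mul_le hσ.1.isHermitian) ha ha' hb hb'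
  rw [hvalue]
  exact ⟨h.1, h.2.trans (hρ.trace_mul_eq_one_iff_fin_two hσ)⟩
end
end

section
/- The maximum over all unit vectors ψ ∈ ℂ² ⊗ ℂ² of A₂(|ψ⟩⟨ψ|, |ψ⟩⟨ψ|) · B_{2,H}(|ψ⟩⟨ψ|, |ψ⟩⟨ψ|) equals (18/5)² = 324/25, and it is attained exactly by product pure states (e.g., ψ = |00⟩); for the Bell state (|00⟩+|11⟩)/√2 the value is 7 · 29/20 = 203/20 < 324/25. -/
/-!
Write a two-qubit vector `ψ` as its `2 × 2` coefficient matrix `Ψ`. For `|ψ⟩⟨ψ|` both `A₂` and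
`B_{2,H}` depend only on `N = ‖ψ‖²` and `t = |det Ψ|²`: the four partial swaps give
`A₂ = 9N² - 8t`, and expanding `R_{4,H}^{⊗2}` into pairs of permutations and contracting the first
qubit turns `B_{2,H}` into a trace polynomial of the reduced state `Ψᴴ Ψ`, whose trace is `N` and
whose determinant is `t`. For a unit vector, `A₂ · B_{2,H} = (9 - 8t)(36/25 - 58/25 t + 236/25 t²)`,
which on the admissible range `0 ≤ t ≤ 1/4` lies strictly below its value `324/25` at `t = 0`.
Finally `det Ψ = 0` exactly for product vectors, and the Bell state has `t = 1/4`.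
-/

open Matrix BigOperators
open scoped ComplexOrder

noncomputable section

/-- `ρ ⊗ σ` on `(ℂ²)^{⊗n} ⊗ (ℂ²)^{⊗n}`. -/
def kron2 {n : ℕ} (ρ σ : Matrix (QIdx n) (QIdx n) ℂ) :
    Matrix (QIdx n × QIdx n) (QIdx n × QIdx n) ℂ :=
  fun p q => ρ p.1 q.1 * σ p.2 q.2

/-- The partial swap `F_S` on `(ℂ²)^{⊗n} ⊗ (ℂ²)^{⊗n}`. -/
def partialSwap {n : ℕ} (S : Finset (Fin n)) :
    Matrix (QIdx n × QIdx n) (QIdx n × QIdx n) ℂ :=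
  fun p q => if (∀ ℓ, if ℓ ∈ S then q.1 ℓ = p.2 ℓ ∧ q.2 ℓ = p.1 ℓ
      else q.1 ℓ = p.1 ℓ ∧ q.2 ℓ = p.2 ℓ) then 1 else 0

/-- The second-moment coefficient `A_n(ρ,σ) = Σ_{S ⊆ [n]} 2^{n−|S|} tr[F_S(ρ⊗σ)]`. -/
def An {n : ℕ} (ρ σ : Matrix (QIdx n) (QIdx n) ℂ) : ℂ :=
  ∑ S : Finset (Fin n), (2 : ℂ)^(n - S.card) * Matrix.trace (partialSwap S * kron2 ρ σ)

/-- The Haar fourth-moment coefficient `B_{n,H}(ρ,σ) = tr[R_{4,H}^{⊗n}(ρ⊗σ⊗ρ⊗σ)]`. -/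
def BnH {n : ℕ} (ρ σ : Matrix (QIdx n) (QIdx n) ℂ) : ℂ :=
  Matrix.trace (repPow n R4H * rep4 ρ σ)

/-- The value `A₂(|ψ⟩⟨ψ|,|ψ⟩⟨ψ|) · B_{2,H}(|ψ⟩⟨ψ|,|ψ⟩⟨ψ|)` for a two-qubit vector. -/
def AB2 (ψ : QIdx 2 → ℂ) : ℝ :=
  (An (pureState ψ) (pureState ψ) * BnH (pureState ψ) (pureState ψ)).re

/-- The two-qubit Bell state `(|00⟩ + |11⟩)/√2`. -/
def bellVec : QIdx 2 → ℂ := fun s => if s 0 = s 1 then 1 / (Real.sqrt 2 : ℂ) else 0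

theorem sum_fin_succ_arrow {α M : Type*} [Fintype α] [AddCommMonoid M] {n : ℕ}
    (f : (Fin (n + 1) → α) → M) : ∑ v, f v = ∑ a, ∑ v : Fin n → α, f (vecCons a v) := by
  rw [← (Fin.consEquiv fun _ => α).sum_comp, Fintype.sum_prod_type]
  rfl

theorem sum_fin_zero_arrow {α M : Type*} [Fintype α] [AddCommMonoid M] (f : (Fin 0 → α) → M) :
    ∑ v, f v = f ![] := by
  rw [Fintype.sum_unique]
  congr 1

theorem sum_qidx_two {M : Type*} [AddCommMonoid M] (f : QIdx 2 → M) :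
    ∑ s, f s = f ![0, 0] + f ![0, 1] + f ![1, 0] + f ![1, 1] := by
  simp only [sum_fin_succ_arrow, sum_fin_zero_arrow, Fin.sum_univ_two, add_assoc]

theorem forall_qidx_two {P : QIdx 2 → Prop} :
    (∀ s, P s) ↔ P ![0, 0] ∧ P ![0, 1] ∧ P ![1, 0] ∧ P ![1, 1] := by
  simp only [Fin.forall_fin_succ_pi, Fin.forall_fin_zero_pi, Fin.forall_fin_two, and_assoc]
  rfl

def coeffMatrix {R : Type*} (ψ : QIdx 2 → R) : Matrix (Fin 2) (Fin 2) R := of fun i j => ψ ![i, j]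

theorem det_coeffMatrix {R : Type*} [CommRing R] (ψ : QIdx 2 → R) :
    (coeffMatrix ψ).det = ψ ![0, 0] * ψ ![1, 1] - ψ ![0, 1] * ψ ![1, 0] :=
  det_fin_two_of _ _ _ _

theorem trace_conjTranspose_mul_coeffMatrix (ψ : QIdx 2 → ℂ) :
    ((coeffMatrix ψ)ᴴ * coeffMatrix ψ).trace = ∑ a, ψ a * star (ψ a) := by
  simp only [trace_fin_two, mul_apply, Fin.sum_univ_two, conjTranspose_apply, coeffMatrix,
    of_apply, sum_qidx_two]
  ring

theorem det_conjTranspose_mul_coeffMatrix (ψ : QIdx 2 → ℂ) :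
    ((coeffMatrix ψ)ᴴ * coeffMatrix ψ).det = Complex.normSq (coeffMatrix ψ).det := by
  rw [det_mul, det_conjTranspose, Complex.normSq_eq_conj_mul_self]
  rfl

theorem partialSwap_apply {n : ℕ} (S : Finset (Fin n)) (p q : QIdx n × QIdx n) :
    partialSwap S p q = if q = (S.piecewise p.2 p.1, S.piecewise p.1 p.2) then 1 else 0 := by
  unfold partialSwap
  congr 1
  simp only [Prod.ext_iff, funext_iff, Finset.piecewise, eq_iff_iff, ← forall_and]
  refine forall_congr' fun ℓ => ?_
  split_ifs <;> rfl

theorem trace_partialSwap_mul_kron2 {n : ℕ} (S : Finset (Fin n))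
    (ρ σ : Matrix (QIdx n) (QIdx n) ℂ) :
    (partialSwap S * kron2 ρ σ).trace =
      ∑ p : QIdx n × QIdx n, kron2 ρ σ (S.piecewise p.2 p.1, S.piecewise p.1 p.2) p := by
  simp only [trace, diag, mul_apply, partialSwap_apply, ite_mul, one_mul, zero_mul,
    Finset.sum_ite_eq', Finset.mem_univ, if_true]

theorem update_vec_two_zero {α : Type*} (a b c : α) : Function.update ![a, b] 0 c = ![c, b] := by
  ext i; fin_cases i <;> rfl

theorem update_vec_two_one {α : Type*} (a b c : α) : Function.update ![a, b] 1 c = ![a, c] := by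
  ext i; fin_cases i <;> rfl

theorem An_pureState (ψ : QIdx 2 → ℂ) :
    An (pureState ψ) (pureState ψ) =
      9 * (∑ a, ψ a * star (ψ a)) ^ 2 - 8 * Complex.normSq (coeffMatrix ψ).det := by
  have hS : (Finset.univ : Finset (Finset (Fin 2))) = {∅, {0}, {1}, Finset.univ} := by decide
  rw [An, hS, Finset.sum_insert (by decide), Finset.sum_insert (by decide),
    Finset.sum_insert (by decide), Finset.sum_singleton]
  simp only [trace_partialSwap_mul_kron2, Fintype.sum_prod_type, sum_qidx_two, kron2, pureState,
    Finset.piecewise_empty, Finset.piecewise_univ, Finset.piecewise_singleton, det_coeffMatrix,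
    Finset.card_empty, Finset.card_singleton, Finset.card_univ, Fintype.card_fin]
  simp only [update_vec_two_zero, update_vec_two_one, cons_val_zero, cons_val_one, RCLike.star_def,
    Complex.normSq_eq_conj_mul_self, map_sub, map_mul]
  push_cast
  ring

def haarCoeff : Fin 10 → ℂ :=
  ![1/5, 1/5, 1/5, 3/5, 3/5, 3/5, -(3/10), -(3/10), -(3/10), -(3/10)]

def haarPerm : Fin 10 → Equiv.Perm (Fin 4) :=
  ![1, Equiv.swap 0 1, Equiv.swap 2 3, Equiv.swap 0 1 * Equiv.swap 2 3,
    Equiv.swap 0 2 * Equiv.swap 1 3, Equiv.swap 0 3 * Equiv.swap 1 2,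
    Equiv.swap 0 2, Equiv.swap 1 3, Equiv.swap 0 3, Equiv.swap 1 2]

theorem R4H_eq_sum : R4H = ∑ i, haarCoeff i • permOp (haarPerm i) := by
  simp only [R4H, haarCoeff, haarPerm, Fin.sum_univ_succ, Fin.sum_univ_zero, ← permOp_one,
    cons_val_zero, cons_val_succ]
  module

theorem prod_permOp_apply {n k : ℕ} (π : Fin n → Equiv.Perm (Fin k)) (x y : Fin k → QIdx n) :
    ∏ ℓ, permOp (π ℓ) (fun r => x r ℓ) (fun r => y r ℓ) =
      if y = fun r ℓ => x (π ℓ r) ℓ then 1 else 0 := by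
  simp only [permOp, Finset.prod_boole, Finset.mem_univ, true_implies, funext_iff]
  exact if_congr forall_comm rfl rfl

theorem trace_repPow_sum_smul_permOp_mul {n k : ℕ} {ι : Type*} [Fintype ι] (c : ι → ℂ)
    (π : ι → Equiv.Perm (Fin k)) (M : Matrix (Fin k → QIdx n) (Fin k → QIdx n) ℂ) :
    (repPow n (∑ i, c i • permOp (π i)) * M).trace =
      ∑ I : Fin n → ι, (∏ ℓ, c (I ℓ)) * ∑ x, M (fun r ℓ => x (π (I ℓ) r) ℓ) x := by
  have hrep : ∀ x y, repPow n (∑ i, c i • permOp (π i)) x y =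
      ∑ I : Fin n → ι, (∏ ℓ, c (I ℓ)) * if y = (fun r ℓ => x (π (I ℓ) r) ℓ) then 1 else 0 := by
    intro x y
    simp only [repPow, Matrix.sum_apply, Matrix.smul_apply, smul_eq_mul]
    rw [Fintype.prod_sum]
    simp only [Finset.prod_mul_distrib, prod_permOp_apply]
  calc (repPow n (∑ i, c i • permOp (π i)) * M).trace
      = ∑ x, ∑ I : Fin n → ι, ∑ y,
          (∏ ℓ, c (I ℓ)) * if y = (fun r ℓ => x (π (I ℓ) r) ℓ) then M y x else 0 := by
        simp only [trace, diag, mul_apply, hrep, Finset.sum_mul, mul_assoc, ite_mul, one_mul,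
          zero_mul]
        exact Finset.sum_congr rfl fun x _ => Finset.sum_comm
    _ = ∑ I : Fin n → ι, (∏ ℓ, c (I ℓ)) * ∑ x, M (fun r ℓ => x (π (I ℓ) r) ℓ) x := by
        simp only [mul_ite, mul_zero, Finset.sum_ite_eq', Finset.mem_univ, if_true, Finset.mul_sum]
        exact Finset.sum_comm

theorem sum_prod_apply_perm_mul {ι α R : Type*} [Fintype ι] [DecidableEq ι] [Fintype α]
    [CommSemiring R] (σ : Equiv.Perm ι) (A B : ι → α → R) :
    ∑ u : ι → α, ∏ r, A r (u (σ r)) * B r (u r) = ∏ r, ∑ c, A r c * B (σ r) c := by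
  rw [Fintype.prod_sum]
  refine Fintype.sum_equiv (Equiv.arrowCongr σ.symm (Equiv.refl α)) _ _ fun u => ?_
  rw [Finset.prod_mul_distrib, Finset.prod_mul_distrib, ← Equiv.prod_comp σ fun r => B r (u r)]
  simp [Equiv.arrowCongr_apply]

theorem coeffMatrix_apply_self {R : Type*} (ψ : QIdx 2 → R) (s : QIdx 2) :
    coeffMatrix ψ (s 0) (s 1) = ψ s := by
  simp only [coeffMatrix, of_apply]
  congr 1
  ext i; fin_cases i <;> rfl

theorem rep4_pureState {n : ℕ} (ψ : QIdx n → ℂ) (a b : Fin 4 → QIdx n) :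
    rep4 (pureState ψ) (pureState ψ) a b = ∏ r, ψ (a r) * star (ψ (b r)) := by
  simp only [rep4, pureState, Fin.prod_univ_four]

-- Summing out the first-qubit indices leaves `Ψᴴ Ψ`, the transposed reduced state of qubit two.
theorem sum_prod_pureState_perm {k : ℕ} (ψ : QIdx 2 → ℂ) (π : Fin 2 → Equiv.Perm (Fin k)) :
    ∑ x : Fin k → QIdx 2, ∏ r, ψ (fun ℓ => x (π ℓ r) ℓ) * star (ψ (x r)) =
      ∑ v : Fin k → Fin 2, ∏ r, ((coeffMatrix ψ)ᴴ * coeffMatrix ψ) (v (π 0 r)) (v (π 1 r)) := by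
  set Ψ := coeffMatrix ψ
  let e : (Fin k → QIdx 2) ≃ (Fin k → Fin 2) × (Fin k → Fin 2) :=
    (Equiv.arrowCongr (Equiv.refl _) (finTwoArrowEquiv _)).trans
      (Equiv.arrowProdEquivProdArrow _ _ _)
  rw [Fintype.sum_equiv e _
      (fun uv => ∏ r, Ψ (uv.1 (π 0 r)) (uv.2 (π 1 r)) * star (Ψ (uv.1 r) (uv.2 r)))
      fun x => by simp only [← coeffMatrix_apply_self ψ]; rfl,
    Fintype.sum_prod_type, Finset.sum_comm]
  refine Finset.sum_congr rfl fun v _ => ?_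
  rw [sum_prod_apply_perm_mul (π 0) (fun r c => Ψ c (v (π 1 r))) (fun r c => star (Ψ c (v r)))]
  simp only [mul_apply, conjTranspose_apply, mul_comm]

theorem BnH_pureState (ψ : QIdx 2 → ℂ) :
    BnH (pureState ψ) (pureState ψ) =
      ∑ I : Fin 2 → Fin 10, (∏ ℓ, haarCoeff (I ℓ)) * ∑ v : Fin 4 → Fin 2,
        ∏ r, ((coeffMatrix ψ)ᴴ * coeffMatrix ψ) (v (haarPerm (I 0) r)) (v (haarPerm (I 1) r)) := by
  rw [BnH, R4H_eq_sum, trace_repPow_sum_smul_permOp_mul]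
  refine Finset.sum_congr rfl fun I _ => ?_
  simp only [rep4_pureState, sum_prod_pureState_perm ψ fun ℓ => haarPerm (I ℓ)]

/- Each inner sum is a product of `trace (k ^ m)` over the cycles of
`haarPerm (I 1) * (haarPerm (I 0))⁻¹`, and Cayley–Hamilton reduces these to `trace k` and `det k`;
the proof expands all 100 terms. -/
theorem sum_haarCoeff_mul_contraction (k : Matrix (Fin 2) (Fin 2) ℂ) :
    ∑ I : Fin 2 → Fin 10, (∏ ℓ, haarCoeff (I ℓ)) * ∑ v : Fin 4 → Fin 2,
        ∏ r, k (v (haarPerm (I 0) r)) (v (haarPerm (I 1) r)) =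
      36/25 * k.trace ^ 4 - 58/25 * k.trace ^ 2 * k.det + 236/25 * k.det ^ 2 := by
  simp only [sum_fin_succ_arrow, sum_fin_zero_arrow, Fin.sum_univ_succ, Fin.sum_univ_zero,
    Fin.prod_univ_two, Fin.prod_univ_four, cons_val_zero, cons_val_one, cons_val_succ, haarPerm,
    haarCoeff, Equiv.Perm.mul_apply, Equiv.Perm.one_apply, Equiv.swap_apply_def, trace_fin_two,
    det_fin_two]
  simp +decide only [cons_val, if_true, if_false, Fin.succ_zero_eq_one]
  ring

theorem BnH_pureState_eq (ψ : QIdx 2 → ℂ) :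
    BnH (pureState ψ) (pureState ψ) =
      36/25 * (∑ a, ψ a * star (ψ a)) ^ 4
        - 58/25 * (∑ a, ψ a * star (ψ a)) ^ 2 * Complex.normSq (coeffMatrix ψ).det
        + 236/25 * (Complex.normSq (coeffMatrix ψ).det : ℂ) ^ 2 := by
  rw [BnH_pureState, sum_haarCoeff_mul_contraction, trace_conjTranspose_mul_coeffMatrix,
    det_conjTranspose_mul_coeffMatrix]

def abPoly (t : ℝ) : ℝ := (9 - 8 * t) * (36/25 - 58/25 * t + 236/25 * t ^ 2)

theorem AB2_eq_abPoly (ψ : QIdx 2 → ℂ) (hψ : ∑ a, ψ a * star (ψ a) = 1) :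
    AB2 ψ = abPoly (Complex.normSq (coeffMatrix ψ).det) := by
  rw [AB2, An_pureState, BnH_pureState_eq, hψ, ← Complex.ofReal_re (abPoly _), abPoly]
  push_cast
  ring_nf

theorem abPoly_zero : abPoly 0 = 324/25 := by norm_num [abPoly]

theorem abPoly_lt {t : ℝ} (ht : 0 < t) (ht' : t ≤ 1/4) : abPoly t < 324/25 := by
  have hq : 0 < 810 - 2588 * t + 1888 * t ^ 2 := by nlinarith
  have : 324/25 - abPoly t = t * (810 - 2588 * t + 1888 * t ^ 2) / 25 := by unfold abPoly; ring
  nlinarith [mul_pos ht hq]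

theorem norm_det_coeffMatrix_le (ψ : QIdx 2 → ℂ) :
    ‖(coeffMatrix ψ).det‖ ≤ (∑ a, ‖ψ a‖ ^ 2) / 2 := by
  rw [det_coeffMatrix, sum_qidx_two]
  calc ‖ψ ![0, 0] * ψ ![1, 1] - ψ ![0, 1] * ψ ![1, 0]‖
      ≤ ‖ψ ![0, 0]‖ * ‖ψ ![1, 1]‖ + ‖ψ ![0, 1]‖ * ‖ψ ![1, 0]‖ := by
        simpa only [norm_mul] using
          norm_sub_le (ψ ![0, 0] * ψ ![1, 1]) (ψ ![0, 1] * ψ ![1, 0])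
    _ ≤ _ := by nlinarith [sq_nonneg (‖ψ ![0, 0]‖ - ‖ψ ![1, 1]‖),
        sq_nonneg (‖ψ ![0, 1]‖ - ‖ψ ![1, 0]‖)]

theorem sum_mul_star_eq {ι : Type*} [Fintype ι] (ψ : ι → ℂ) :
    ∑ a, ψ a * star (ψ a) = ((∑ a, ‖ψ a‖ ^ 2 : ℝ) : ℂ) := by
  simp [Complex.mul_conj, Complex.normSq_eq_norm_sq]

theorem normSq_det_coeffMatrix_le (ψ : QIdx 2 → ℂ) (hψ : ∑ a, ψ a * star (ψ a) = 1) :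
    Complex.normSq (coeffMatrix ψ).det ≤ 1/4 := by
  have hN : ∑ a, ‖ψ a‖ ^ 2 = 1 := by exact_mod_cast (sum_mul_star_eq ψ).symm.trans hψ
  have := norm_det_coeffMatrix_le ψ
  rw [hN] at this
  rw [Complex.normSq_eq_norm_sq]
  nlinarith [norm_nonneg (coeffMatrix ψ).det]

theorem det_coeffMatrix_eq_zero_iff {K : Type*} [Field K] (ψ : QIdx 2 → K) :
    (coeffMatrix ψ).det = 0 ↔ ∃ ψ₁ ψ₂ : Fin 2 → K, ∀ s, ψ s = ψ₁ (s 0) * ψ₂ (s 1) := by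
  rw [det_coeffMatrix]
  constructor
  · intro h
    by_cases h00 : ψ ![0, 0] = 0
    · have : ψ ![0, 1] = 0 ∨ ψ ![1, 0] = 0 := by simpa [h00] using h
      rcases this with h01 | h10
      · exact ⟨![0, 1], ![ψ ![1, 0], ψ ![1, 1]], by simp [forall_qidx_two, h00, h01]⟩
      · exact ⟨![ψ ![0, 1], ψ ![1, 1]], ![0, 1], by simp [forall_qidx_two, h00, h10]⟩
    · refine ⟨![ψ ![0, 0], ψ ![1, 0]], ![1, ψ ![0, 1] / ψ ![0, 0]], ?_⟩
      simp only [forall_qidx_two, cons_val_zero, cons_val_one]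
      refine ⟨by ring, by field_simp, by ring, ?_⟩
      field_simp
      linear_combination h
  · rintro ⟨ψ₁, ψ₂, hψ⟩
    simp only [hψ, cons_val_zero, cons_val_one]
    ring

theorem AB2_le (ψ : QIdx 2 → ℂ) (hψ : ∑ a, ψ a * star (ψ a) = 1) : AB2 ψ ≤ 324/25 := by
  rw [AB2_eq_abPoly ψ hψ]
  rcases (Complex.normSq_nonneg (coeffMatrix ψ).det).eq_or_lt with h | h
  · rw [← h, abPoly_zero]
  · exact (abPoly_lt h (normSq_det_coeffMatrix_le ψ hψ)).le

theorem AB2_eq_iff (ψ : QIdx 2 → ℂ) (hψ : ∑ a, ψ a * star (ψ a) = 1) :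
    AB2 ψ = 324/25 ↔ (coeffMatrix ψ).det = 0 := by
  rw [AB2_eq_abPoly ψ hψ, ← Complex.normSq_eq_zero]
  refine ⟨fun h => ?_, fun h => by rw [h, abPoly_zero]⟩
  by_contra h0
  exact (abPoly_lt ((Complex.normSq_nonneg _).lt_of_ne' h0)
    (normSq_det_coeffMatrix_le ψ hψ)).ne h

theorem sum_bellVec_mul_star : ∑ a, bellVec a * star (bellVec a) = 1 := by
  have h : (Real.sqrt 2 : ℂ)⁻¹ * (Real.sqrt 2 : ℂ)⁻¹ = 2⁻¹ := by
    rw [← mul_inv, ← Complex.ofReal_mul, Real.mul_self_sqrt zero_le_two]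
    norm_num
  norm_num [sum_qidx_two, bellVec, h]

theorem AB2_bellVec : AB2 bellVec = 203/20 := by
  rw [AB2_eq_abPoly bellVec sum_bellVec_mul_star, det_coeffMatrix]
  norm_num [bellVec, abPoly]

/-- The maximum of `A₂ · B_{2,H}` on identical pure two-qubit pairs is
`(18/5)² = 324/25`, attained exactly by product pure states; for the Bell state the
value is `203/20 < 324/25`. -/
theorem two_qubit_certificate_max :
    IsGreatest {x : ℝ | ∃ ψ : QIdx 2 → ℂ, (∑ a, ψ a * star (ψ a)) = 1 ∧ x = AB2 ψ}
      ((18/5 : ℝ)^2) ∧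
    ((18/5 : ℝ)^2 = 324/25) ∧
    (∀ ψ : QIdx 2 → ℂ, (∑ a, ψ a * star (ψ a)) = 1 →
      (AB2 ψ = 324/25 ↔ ∃ ψ₁ ψ₂ : Fin 2 → ℂ, ∀ s, ψ s = ψ₁ (s 0) * ψ₂ (s 1))) ∧
    AB2 bellVec = 203/20 ∧
    (203/20 : ℝ) < 324/25 := by
  let ψ₀ : QIdx 2 → ℂ := fun s => ![1, 0] (s 0) * ![1, 0] (s 1)
  have hψ₀ : ∑ a, ψ₀ a * star (ψ₀ a) = 1 := by simp [ψ₀, sum_qidx_two]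
  have hmax : AB2 ψ₀ = 324/25 :=
    (AB2_eq_iff ψ₀ hψ₀).2 ((det_coeffMatrix_eq_zero_iff ψ₀).2 ⟨_, _, fun _ => rfl⟩)
  refine ⟨⟨⟨ψ₀, hψ₀, by rw [hmax]; norm_num⟩, ?_⟩, by norm_num,
    fun ψ hψ => (AB2_eq_iff ψ hψ).trans (det_coeffMatrix_eq_zero_iff ψ), AB2_bellVec, by norm_num⟩
  rintro x ⟨ψ, hψ, rfl⟩
  exact (AB2_le ψ hψ).trans_eq (by norm_num)
end
end

section
/- Let |Φ⁺⟩ := (|00⟩ + |11⟩)/√2 and ρ_Bell := |Φ⁺⟩⟨Φ⁺|. For n = 2m, let ρ_BD := ρ_Bell^{⊗m} on (ℂ²)^{⊗n} (the j-th Bell pair occupying qubits 2j−1 and 2j); for n = 2m+1, let ρ_BD := ρ_Bell^{⊗m} ⊗ |φ⟩⟨φ| with |φ⟩ ∈ ℂ² an arbitrary unit vector. Then: (i) A_n(ρ_BD, ρ_BD) = 7^{⌊n/2⌋} · 3^{n mod 2}; (ii) B_{n,H}(ρ_BD, ρ_BD) = (29/20)^{⌊n/2⌋} · (6/5)^{n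 mod 2}; and (iii) A_n(ρ_BD, ρ_BD) · B_{n,H}(ρ_BD, ρ_BD) ≤ (18/5)^n. -/
open Matrix BigOperators
open scoped ComplexOrder

noncomputable section

/-- The Bell-dimer state on `(ℂ²)^{⊗n}`: Bell pairs `(|00⟩+|11⟩)/√2` on the qubit pairs
`(2j−1, 2j)` and, when `n` is odd, the single-qubit state `φ` on the last qubit. -/
def bellDimerVec (n : ℕ) (φ : Fin 2 → ℂ) : QIdx n → ℂ :=
  fun s =>
    (∏ j : Fin (n / 2),
      if s ⟨2 * j.1, by omega⟩ = s ⟨2 * j.1 + 1, by have := j.2; omega⟩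
        then 1 / (Real.sqrt 2 : ℂ) else 0) *
    (if h : n % 2 = 1 then φ (s ⟨n - 1, by omega⟩) else 1)

def M2 : Matrix (Fin 2 → Fin 2) (Fin 2 → Fin 2) ℂ :=
  (2 : ℂ) • 1 + permOp (Equiv.swap 0 1)

def val (k n : ℕ) (R : Matrix (Fin k → Fin 2) (Fin k → Fin 2) ℂ) (ψ : QIdx n → ℂ) : ℂ :=
  ∑ a : Fin k → QIdx n, ∑ b : Fin k → QIdx n,
    (∏ ℓ, R (fun r => a r ℓ) (fun r => b r ℓ)) * ∏ r, ψ (b r) * star (ψ (a r))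

lemma M2_apply (u v : Fin 2 → Fin 2) :
    M2 u v = (if v 0 = u 1 ∧ v 1 = u 0 then 1 else 0)
      + 2 * (if v 0 = u 0 ∧ v 1 = u 1 then 1 else 0) := by
  simp only [M2, Matrix.add_apply, Matrix.smul_apply, Matrix.one_apply, permOp, smul_eq_mul]
  have h1 : (u = v) ↔ (v 0 = u 0 ∧ v 1 = u 1) := by
    constructor
    · rintro rfl; exact ⟨rfl, rfl⟩
    · rintro ⟨h0, h1⟩; funext i; fin_cases i <;> simp [h0.symm, h1.symm]
  have h2 : (∀ i, v i = u ((Equiv.swap 0 1) i)) ↔ (v 0 = u 1 ∧ v 1 = u 0) := by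
    constructor
    · intro h; exact ⟨by simpa using h 0, by simpa using h 1⟩
    · rintro ⟨h0, h1⟩ i; fin_cases i <;> simpa [Equiv.swap_apply_def]
  rw [if_congr h1 rfl rfl, if_congr h2 rfl rfl]; ring

lemma sumS {n : ℕ} (p q : QIdx n × QIdx n) :
    ∑ S : Finset (Fin n), (2 : ℂ)^(n - S.card) * partialSwap S p q
    = ∏ ℓ : Fin n, ((if q.1 ℓ = p.2 ℓ ∧ q.2 ℓ = p.1 ℓ then (1:ℂ) else 0)
        + 2 * (if q.1 ℓ = p.1 ℓ ∧ q.2 ℓ = p.2 ℓ then 1 else 0)) := by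
  rw [Finset.prod_add, ← Finset.powerset_univ]
  refine Finset.sum_congr rfl ?_
  intro S hS
  rw [Finset.prod_mul_distrib, Finset.prod_const]
  have hcard : (Finset.univ \ S).card = n - S.card := by
    rw [Finset.card_sdiff_of_subset (Finset.subset_univ S), Finset.card_univ, Fintype.card_fin]
  rw [hcard]
  have hps : partialSwap S p q
      = (∏ ℓ ∈ S, (if q.1 ℓ = p.2 ℓ ∧ q.2 ℓ = p.1 ℓ then (1:ℂ) else 0))
        * ∏ ℓ ∈ Finset.univ \ S, (if q.1 ℓ = p.1 ℓ ∧ q.2 ℓ = p.2 ℓ then (1:ℂ) else 0) := by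
    have h0 : partialSwap S p q = ∏ ℓ : Fin n,
        (if (if ℓ ∈ S then (q.1 ℓ = p.2 ℓ ∧ q.2 ℓ = p.1 ℓ)
          else (q.1 ℓ = p.1 ℓ ∧ q.2 ℓ = p.2 ℓ)) then (1:ℂ) else 0) := by
      rw [partialSwap, Finset.prod_boole]
      simp
    rw [h0, ← Finset.prod_sdiff (Finset.subset_univ S), mul_comm]
    congr 1
    · exact Finset.prod_congr rfl (fun ℓ hℓ => by simp [hℓ])
    · exact Finset.prod_congr rfl (fun ℓ hℓ => by
        simp [(Finset.mem_sdiff.mp hℓ).2])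
  rw [hps]; ring

def e2 (β : Type*) : β × β ≃ (Fin 2 → β) where
  toFun x := ![x.1, x.2]
  invFun a := (a 0, a 1)
  left_inv x := rfl
  right_inv a := by funext i; fin_cases i <;> rfl

def e4 (β : Type*) : β × β × β × β ≃ (Fin 4 → β) where
  toFun x := ![x.1, x.2.1, x.2.2.1, x.2.2.2]
  invFun a := (a 0, a 1, a 2, a 3)
  left_inv x := rfl
  right_inv a := by funext i; fin_cases i <;> rfl

lemma sum_pi_two {M : Type*} [AddCommMonoid M] {β : Type*} [Fintype β]
    (f : (Fin 2 → β) → M) :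
    ∑ a : Fin 2 → β, f a = ∑ x : β, ∑ y : β, f ![x, y] := by
  rw [← (e2 β).sum_comp f, Fintype.sum_prod_type]
  rfl

lemma sum_pi_four {M : Type*} [AddCommMonoid M] {β : Type*} [Fintype β]
    (f : (Fin 4 → β) → M) :
    ∑ a : Fin 4 → β, f a
      = ∑ x : β, ∑ y : β, ∑ z : β, ∑ w : β, f ![x, y, z, w] := by
  rw [← (e4 β).sum_comp f, Fintype.sum_prod_type]
  refine Finset.sum_congr rfl (fun x _ => ?_)
  rw [Fintype.sum_prod_type]
  refine Finset.sum_congr rfl (fun y _ => ?_)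
  rw [Fintype.sum_prod_type]
  rfl

lemma trace_mul_expand {ι : Type*} [Fintype ι] [DecidableEq ι] (A B : Matrix ι ι ℂ) :
    Matrix.trace (A * B) = ∑ p : ι, ∑ q : ι, A p q * B q p := by
  simp [Matrix.trace, Matrix.mul_apply, Matrix.diag]

lemma An_eq_val {n : ℕ} (ψ : QIdx n → ℂ) :
    An (pureState ψ) (pureState ψ) = val 2 n M2 ψ := by
  have lhs : An (pureState ψ) (pureState ψ)
      = ∑ p : QIdx n × QIdx n, ∑ q : QIdx n × QIdx n,
          (∏ ℓ : Fin n, ((if q.1 ℓ = p.2 ℓ ∧ q.2 ℓ = p.1 ℓ then (1:ℂ) else 0)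
            + 2 * (if q.1 ℓ = p.1 ℓ ∧ q.2 ℓ = p.2 ℓ then 1 else 0)))
          * (ψ q.1 * star (ψ p.1) * (ψ q.2 * star (ψ p.2))) := by
    rw [An]
    simp only [trace_mul_expand, Finset.mul_sum]
    rw [Finset.sum_comm]
    refine Finset.sum_congr rfl (fun p _ => ?_)
    rw [Finset.sum_comm]
    refine Finset.sum_congr rfl (fun q _ => ?_)
    have : ∑ S : Finset (Fin n), (2:ℂ) ^ (n - S.card)
          * (partialSwap S p q * kron2 (pureState ψ) (pureState ψ) q p)
        = (∑ S : Finset (Fin n), (2:ℂ) ^ (n - S.card) * partialSwap S p q)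
          * kron2 (pureState ψ) (pureState ψ) q p := by
      rw [Finset.sum_mul]; exact Finset.sum_congr rfl (fun S _ => by ring)
    rw [this, sumS]
    congr 1
  rw [lhs, val, sum_pi_two, Fintype.sum_prod_type]
  refine Finset.sum_congr rfl (fun p1 _ => ?_)
  refine Finset.sum_congr rfl (fun p2 _ => ?_)
  rw [sum_pi_two, Fintype.sum_prod_type]
  refine Finset.sum_congr rfl (fun q1 _ => ?_)
  refine Finset.sum_congr rfl (fun q2 _ => ?_)
  have hprod : (∏ ℓ : Fin n, M2 (fun r => (![p1, p2] : Fin 2 → QIdx n) r ℓ)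
        (fun r => (![q1, q2] : Fin 2 → QIdx n) r ℓ))
      = ∏ ℓ : Fin n, ((if q1 ℓ = p2 ℓ ∧ q2 ℓ = p1 ℓ then (1:ℂ) else 0)
            + 2 * (if q1 ℓ = p1 ℓ ∧ q2 ℓ = p2 ℓ then 1 else 0)) := by
    refine Finset.prod_congr rfl (fun ℓ _ => ?_)
    rw [M2_apply]
    simp
  rw [hprod, Fin.prod_univ_two]
  simp

lemma BnH_eq_val {n : ℕ} (ψ : QIdx n → ℂ) :
    BnH (pureState ψ) (pureState ψ) = val 4 n R4H ψ := by
  rw [BnH, trace_mul_expand, val]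
  refine Finset.sum_congr rfl (fun a _ => ?_)
  refine Finset.sum_congr rfl (fun b _ => ?_)
  congr 1
  rw [rep4, Fin.prod_univ_four]
  simp only [pureState]

def splitE (k p q : ℕ) : (Fin k → QIdx p) × (Fin k → QIdx q) ≃ (Fin k → QIdx (p+q)) where
  toFun x r := Fin.append (x.1 r) (x.2 r)
  invFun a := (fun r i => a r (Fin.castAdd q i), fun r i => a r (Fin.natAdd p i))
  left_inv x := by
    refine Prod.ext (funext fun r => funext fun i => ?_) (funext fun r => funext fun i => ?_)
    · exact Fin.append_left _ _ i
    · exact Fin.append_right _ _ i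
  right_inv a := by
    funext r i
    refine Fin.addCases (fun j => ?_) (fun j => ?_) i
    · exact Fin.append_left _ _ j
    · exact Fin.append_right _ _ j

lemma val_split (k p q : ℕ) (R : Matrix (Fin k → Fin 2) (Fin k → Fin 2) ℂ)
    (ψ : QIdx (p+q) → ℂ) (ψ1 : QIdx p → ℂ) (ψ2 : QIdx q → ℂ)
    (h : ∀ s, ψ s = ψ1 (fun i => s (Fin.castAdd q i)) * ψ2 (fun i => s (Fin.natAdd p i))) :
    val k (p+q) R ψ = val k p R ψ1 * val k q R ψ2 := by
  let E := splitE k p q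
  have Eapp : ∀ x r, E x r = Fin.append (x.1 r) (x.2 r) := fun _ _ => rfl
  rw [val, ← E.sum_comp, Fintype.sum_prod_type]
  have inner : ∀ x : (Fin k → QIdx p) × (Fin k → QIdx q),
      ∑ b : Fin k → QIdx (p+q),
        (∏ ℓ, R (fun r => E x r ℓ) (fun r => b r ℓ)) * ∏ r, ψ (b r) * star (ψ (E x r))
      = ∑ y : (Fin k → QIdx p) × (Fin k → QIdx q),
        ((∏ ℓ, R (fun r => x.1 r ℓ) (fun r => y.1 r ℓ)) * ∏ r, ψ1 (y.1 r) * star (ψ1 (x.1 r)))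
        * ((∏ ℓ, R (fun r => x.2 r ℓ) (fun r => y.2 r ℓ)) * ∏ r, ψ2 (y.2 r) * star (ψ2 (x.2 r))) := by
    intro x
    rw [← E.sum_comp]
    refine Finset.sum_congr rfl (fun y _ => ?_)
    have hR : (∏ ℓ, R (fun r => E x r ℓ) (fun r => E y r ℓ))
        = (∏ ℓ, R (fun r => x.1 r ℓ) (fun r => y.1 r ℓ))
          * ∏ ℓ, R (fun r => x.2 r ℓ) (fun r => y.2 r ℓ) := by
      rw [Fin.prod_univ_add]
      congr 1
      · refine Finset.prod_congr rfl (fun ℓ _ => ?_)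
        congr 1 <;> funext r <;> rw [Eapp] <;> exact Fin.append_left _ _ ℓ
      · refine Finset.prod_congr rfl (fun ℓ _ => ?_)
        congr 1 <;> funext r <;> rw [Eapp] <;> exact Fin.append_right _ _ ℓ
    have hψ : (∏ r, ψ (E y r) * star (ψ (E x r)))
        = (∏ r, ψ1 (y.1 r) * star (ψ1 (x.1 r))) * ∏ r, ψ2 (y.2 r) * star (ψ2 (x.2 r)) := by
      rw [← Finset.prod_mul_distrib]
      refine Finset.prod_congr rfl (fun r _ => ?_)
      have h1 : ψ (E y r) = ψ1 (y.1 r) * ψ2 (y.2 r) := by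
        rw [h]
        congr 1
        · congr 1; funext i; rw [Eapp]; exact Fin.append_left _ _ i
        · congr 1; funext i; rw [Eapp]; exact Fin.append_right _ _ i
      have h2 : ψ (E x r) = ψ1 (x.1 r) * ψ2 (x.2 r) := by
        rw [h]
        congr 1
        · congr 1; funext i; rw [Eapp]; exact Fin.append_left _ _ i
        · congr 1; funext i; rw [Eapp]; exact Fin.append_right _ _ i
      rw [h1, h2, star_mul']
      ring
    rw [hR, hψ]
    ring
  calc ∑ x1 : Fin k → QIdx p, ∑ x2 : Fin k → QIdx q,
        ∑ b : Fin k → QIdx (p+q),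
          (∏ ℓ, R (fun r => E (x1, x2) r ℓ) (fun r => b r ℓ))
            * ∏ r, ψ (b r) * star (ψ (E (x1, x2) r))
      = ∑ x1 : Fin k → QIdx p, ∑ x2 : Fin k → QIdx q,
        ∑ y : (Fin k → QIdx p) × (Fin k → QIdx q),
        ((∏ ℓ, R (fun r => x1 r ℓ) (fun r => y.1 r ℓ)) * ∏ r, ψ1 (y.1 r) * star (ψ1 (x1 r)))
        * ((∏ ℓ, R (fun r => x2 r ℓ) (fun r => y.2 r ℓ)) * ∏ r, ψ2 (y.2 r) * star (ψ2 (x2 r))) := by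
        refine Finset.sum_congr rfl (fun x1 _ => Finset.sum_congr rfl (fun x2 _ => ?_))
        exact inner (x1, x2)
    _ = val k p R ψ1 * val k q R ψ2 := by
        rw [val, val, Finset.sum_mul_sum]
        refine Finset.sum_congr rfl (fun x1 _ => ?_)
        refine Finset.sum_congr rfl (fun x2 _ => ?_)
        rw [Fintype.sum_prod_type, Finset.sum_mul_sum]

def bell2vec : QIdx 2 → ℂ := fun s => if s 0 = s 1 then 1 / (Real.sqrt 2 : ℂ) else 0

lemma bell_even_split (m : ℕ) (φ : Fin 2 → ℂ) (s : QIdx (2*m+2)) :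
    bellDimerVec (2*m+2) φ s
      = bellDimerVec (2*m) φ (fun i => s (Fin.castAdd 2 i))
        * bell2vec (fun i => s (Fin.natAdd (2*m) i)) := by
  rw [bellDimerVec, bellDimerVec, bell2vec]
  rw [dif_neg (by omega), dif_neg (by omega), mul_one, mul_one]
  have h1 : m + 1 = (2*m+2)/2 := by omega
  have h2 : m = (2*m)/2 := by omega
  rw [← Fin.prod_congr' _ h1, ← Fin.prod_congr' _ h2, Fin.prod_univ_castSucc]
  congr 1

lemma bell_odd_split (m : ℕ) (φ : Fin 2 → ℂ) (s : QIdx (2*m+1)) :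
    bellDimerVec (2*m+1) φ s
      = bellDimerVec (2*m) φ (fun i => s (Fin.castAdd 1 i))
        * φ ((fun i => s (Fin.natAdd (2*m) i)) 0) := by
  rw [bellDimerVec, bellDimerVec]
  rw [dif_pos (by omega), dif_neg (by omega), mul_one]
  have h2 : m = (2*m+1)/2 := by omega
  have h2' : m = (2*m)/2 := by omega
  rw [← Fin.prod_congr' _ h2, ← Fin.prod_congr' _ h2']
  congr 1

lemma val_zero (k : ℕ) (R : Matrix (Fin k → Fin 2) (Fin k → Fin 2) ℂ) (φ : Fin 2 → ℂ) :
    val k 0 R (bellDimerVec 0 φ) = 1 := by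
  rw [val]
  rw [Fintype.sum_subsingleton _ (fun _ _ => (0 : Fin 2))]
  rw [Fintype.sum_subsingleton _ (fun _ _ => (0 : Fin 2))]
  have hψ : ∀ t : QIdx 0, bellDimerVec 0 φ t = 1 := by
    intro t
    rw [bellDimerVec, dif_neg (by omega), mul_one]
    have : (0:ℕ)/2 = 0 := rfl
    exact Finset.prod_congr (by simp [Finset.univ_eq_empty]) (fun x hx => rfl) |>.trans Finset.prod_empty
  simp [hψ]

lemma val_bell_even (k : ℕ) (R : Matrix (Fin k → Fin 2) (Fin k → Fin 2) ℂ)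
    (φ : Fin 2 → ℂ) (m : ℕ) :
    val k (2*m) R (bellDimerVec (2*m) φ) = (val k 2 R bell2vec) ^ m := by
  induction m with
  | zero => simpa using val_zero k R φ
  | succ m ih =>
    have key : val k (2*m+2) R (bellDimerVec (2*m+2) φ)
        = val k (2*m) R (bellDimerVec (2*m) φ) * val k 2 R bell2vec :=
      val_split k (2*m) 2 R _ _ _ (bell_even_split m φ)
    have hmn : 2*(m+1) = 2*m+2 := by ring
    rw [show (2*(m+1)) = 2*m+2 from hmn] at *
    rw [key, ih, pow_succ]

lemma val_bell_odd (k : ℕ) (R : Matrix (Fin k → Fin 2) (Fin k → Fin 2) ℂ)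
    (φ : Fin 2 → ℂ) (m : ℕ) :
    val k (2*m+1) R (bellDimerVec (2*m+1) φ)
      = (val k 2 R bell2vec) ^ m * val k 1 R (fun t => φ (t 0)) := by
  have key : val k (2*m+1) R (bellDimerVec (2*m+1) φ)
      = val k (2*m) R (bellDimerVec (2*m) φ) * val k 1 R (fun t => φ (t 0)) :=
    val_split k (2*m) 1 R _ _ _ (bell_odd_split m φ)
  rw [key, val_bell_even]

lemma w_mul_star : (1 / (Real.sqrt 2 : ℂ)) * star (1 / (Real.sqrt 2 : ℂ)) = 1/2 := by
  have h : star ((Real.sqrt 2 : ℝ) : ℂ) = ((Real.sqrt 2 : ℝ) : ℂ) := Complex.conj_ofReal _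
  rw [star_div₀, star_one, h, div_mul_div_comm, one_mul, ← Complex.ofReal_mul,
    Real.mul_self_sqrt (by norm_num)]
  norm_num

lemma val_bell2_reduce (k : ℕ) (R : Matrix (Fin k → Fin 2) (Fin k → Fin 2) ℂ) :
    val k 2 R bell2vec
      = ∑ u : Fin k → Fin 2, ∑ v : Fin k → Fin 2, (R u v * R u v) * ((1:ℂ)/2)^k := by
  classical
  set ι : (Fin k → Fin 2) → (Fin k → QIdx 2) := fun u r _ => u r with hι
  have hinj : Function.Injective ι := by
    intro u v huv
    funext r
    exact congrFun (congrFun huv r) 0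
  have hmem : ∀ a : Fin k → QIdx 2, a ∉ Finset.image ι Finset.univ → ∃ r, a r 0 ≠ a r 1 := by
    intro a ha
    by_contra hc
    push_neg at hc
    refine ha (Finset.mem_image.mpr ⟨fun r => a r 0, Finset.mem_univ _, ?_⟩)
    funext r i
    fin_cases i
    · rfl
    · exact hc r
  rw [val]
  rw [← Finset.sum_subset (Finset.subset_univ (Finset.image ι Finset.univ)) (by
    intro a _ ha
    obtain ⟨r0, hr0⟩ := hmem a ha
    refine Finset.sum_eq_zero (fun b _ => ?_)
    have : (∏ r, bell2vec (b r) * star (bell2vec (a r))) = 0 := by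
      refine Finset.prod_eq_zero (Finset.mem_univ r0) ?_
      have : bell2vec (a r0) = 0 := by rw [bell2vec, if_neg hr0]
      rw [this, star_zero, mul_zero]
    rw [this, mul_zero])]
  rw [Finset.sum_image (fun u _ v _ h => hinj h)]
  refine Finset.sum_congr rfl (fun u _ => ?_)
  rw [← Finset.sum_subset (Finset.subset_univ (Finset.image ι Finset.univ)) (by
    intro b _ hb
    obtain ⟨r0, hr0⟩ := hmem b hb
    have : (∏ r, bell2vec (b r) * star (bell2vec (ι u r))) = 0 := by
      refine Finset.prod_eq_zero (Finset.mem_univ r0) ?_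
      have : bell2vec (b r0) = 0 := by rw [bell2vec, if_neg hr0]
      rw [this, zero_mul]
    rw [this, mul_zero])]
  rw [Finset.sum_image (fun u _ v _ h => hinj h)]
  refine Finset.sum_congr rfl (fun v _ => ?_)
  congr 1
  · rw [Fin.prod_univ_two]
  · have hb : ∀ w : Fin k → Fin 2, ∀ r, bell2vec (ι w r) = 1 / (Real.sqrt 2 : ℂ) := by
      intro w r
      rw [bell2vec, if_pos rfl]
    calc (∏ r, bell2vec (ι v r) * star (bell2vec (ι u r)))
        = ∏ _r : Fin k, ((1:ℂ)/2) := by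
          refine Finset.prod_congr rfl (fun r _ => ?_)
          rw [hb, hb, w_mul_star]
      _ = ((1:ℂ)/2)^k := by rw [Finset.prod_const, Finset.card_univ, Fintype.card_fin]

lemma A_pair : val 2 2 M2 bell2vec = 7 := by
  rw [val_bell2_reduce]
  rw [sum_pi_two]
  simp only [sum_pi_two, M2_apply, Fin.sum_univ_two,
    Matrix.cons_val_zero, Matrix.cons_val_one, Matrix.head_cons]
  norm_num

lemma sum_pi_one {M : Type*} [AddCommMonoid M] {β : Type*} [Fintype β]
    (f : (Fin 1 → β) → M) :
    ∑ a : Fin 1 → β, f a = ∑ x : β, f (fun _ => x) := by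
  rw [← (Equiv.funUnique (Fin 1) β).symm.sum_comp f]
  rfl

lemma A_single (φ : Fin 2 → ℂ) (hφ : (∑ i, φ i * star (φ i)) = 1) :
    val 2 1 M2 (fun t : QIdx 1 => φ (t 0)) = 3 := by
  have hφ' : φ 0 * star (φ 0) + φ 1 * star (φ 1) = 1 := by
    rw [← hφ, Fin.sum_univ_two]
  rw [val]
  rw [sum_pi_two]
  simp only [sum_pi_two, sum_pi_one, M2_apply, Fin.sum_univ_two, Fin.prod_univ_two,
    Fin.prod_univ_one, Matrix.cons_val_zero, Matrix.cons_val_one, Matrix.head_cons]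
  norm_num
  simp only [Complex.star_def] at hφ' ⊢
  linear_combination (3 * (φ 0 * (starRingEnd ℂ) (φ 0) + φ 1 * (starRingEnd ℂ) (φ 1)) + 3) * hφ'

lemma perm_cond_iff (u v : Fin 4 → Fin 2) (π : Equiv.Perm (Fin 4)) :
    (∀ i, v i = u (π i)) ↔ (v 0 = u (π 0) ∧ v 1 = u (π 1) ∧ v 2 = u (π 2) ∧ v 3 = u (π 3)) := by
  constructor
  · intro h; exact ⟨h 0, h 1, h 2, h 3⟩
  · rintro ⟨h0, h1, h2, h3⟩ i; fin_cases i <;> assumption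

lemma R4H_apply (u v : Fin 4 → Fin 2) :
    R4H u v
    = (1/5) * ((if v 0 = u 0 ∧ v 1 = u 1 ∧ v 2 = u 2 ∧ v 3 = u 3 then (1:ℂ) else 0)
        + (if v 0 = u 1 ∧ v 1 = u 0 ∧ v 2 = u 2 ∧ v 3 = u 3 then 1 else 0)
        + (if v 0 = u 0 ∧ v 1 = u 1 ∧ v 2 = u 3 ∧ v 3 = u 2 then 1 else 0))
    + (3/5) * ((if v 0 = u 1 ∧ v 1 = u 0 ∧ v 2 = u 3 ∧ v 3 = u 2 then 1 else 0)
        + (if v 0 = u 2 ∧ v 1 = u 3 ∧ v 2 = u 0 ∧ v 3 = u 1 then 1 else 0)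
        + (if v 0 = u 3 ∧ v 1 = u 2 ∧ v 2 = u 1 ∧ v 3 = u 0 then 1 else 0))
    - (3/10) * ((if v 0 = u 2 ∧ v 1 = u 1 ∧ v 2 = u 0 ∧ v 3 = u 3 then 1 else 0)
        + (if v 0 = u 0 ∧ v 1 = u 3 ∧ v 2 = u 2 ∧ v 3 = u 1 then 1 else 0)
        + (if v 0 = u 3 ∧ v 1 = u 1 ∧ v 2 = u 2 ∧ v 3 = u 0 then 1 else 0)
        + (if v 0 = u 0 ∧ v 1 = u 2 ∧ v 2 = u 1 ∧ v 3 = u 3 then 1 else 0)) := by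
  have hone : ((1 : Matrix (Fin 4 → Fin 2) (Fin 4 → Fin 2) ℂ) u v)
      = (if v 0 = u 0 ∧ v 1 = u 1 ∧ v 2 = u 2 ∧ v 3 = u 3 then (1:ℂ) else 0) := by
    rw [Matrix.one_apply]
    congr 1
    simp only [eq_iff_iff]
    constructor
    · rintro rfl; exact ⟨rfl, rfl, rfl, rfl⟩
    · rintro ⟨h0, h1, h2, h3⟩; funext i; fin_cases i <;> simp [h0.symm, h1.symm, h2.symm, h3.symm]
  have hperm : ∀ (π : Equiv.Perm (Fin 4)) (w x y z : Fin 4), π 0 = w → π 1 = x → π 2 = y → π 3 = z →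
      permOp π u v = (if v 0 = u w ∧ v 1 = u x ∧ v 2 = u y ∧ v 3 = u z then (1:ℂ) else 0) := by
    intro π w x y z h0 h1 h2 h3
    rw [permOp]
    congr 1
    simp only [eq_iff_iff]
    rw [perm_cond_iff, h0, h1, h2, h3]
  simp only [R4H, Matrix.add_apply, Matrix.sub_apply, Matrix.smul_apply, smul_eq_mul, hone,
    hperm (Equiv.swap 0 1) 1 0 2 3 (by decide) (by decide) (by decide) (by decide),
    hperm (Equiv.swap 2 3) 0 1 3 2 (by decide) (by decide) (by decide) (by decide),
    hperm (Equiv.swap 0 1 * Equiv.swap 2 3) 1 0 3 2 (by decide) (by decide) (by decide) (by decide),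
    hperm (Equiv.swap 0 2 * Equiv.swap 1 3) 2 3 0 1 (by decide) (by decide) (by decide) (by decide),
    hperm (Equiv.swap 0 3 * Equiv.swap 1 2) 3 2 1 0 (by decide) (by decide) (by decide) (by decide),
    hperm (Equiv.swap 0 2) 2 1 0 3 (by decide) (by decide) (by decide) (by decide),
    hperm (Equiv.swap 1 3) 0 3 2 1 (by decide) (by decide) (by decide) (by decide),
    hperm (Equiv.swap 0 3) 3 1 2 0 (by decide) (by decide) (by decide) (by decide),
    hperm (Equiv.swap 1 2) 0 2 1 3 (by decide) (by decide) (by decide) (by decide)]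

set_option maxHeartbeats 2000000 in
lemma B_pair : val 4 2 R4H bell2vec = 29/20 := by
  rw [val_bell2_reduce]
  rw [sum_pi_four]
  simp only [sum_pi_four, R4H_apply, Fin.sum_univ_two,
    Matrix.cons_val_zero, Matrix.cons_val_one, Matrix.head_cons,
    Matrix.cons_val_two, Matrix.tail_cons, Matrix.cons_val_three]
  norm_num

set_option maxHeartbeats 4000000 in
lemma B_single (φ : Fin 2 → ℂ) (hφ : (∑ i, φ i * star (φ i)) = 1) :
    val 4 1 R4H (fun t : QIdx 1 => φ (t 0)) = 6/5 := by
  have hφ' : φ 0 * (starRingEnd ℂ) (φ 0) + φ 1 * (starRingEnd ℂ) (φ 1) = 1 := by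
    rw [← hφ, Fin.sum_univ_two]; rfl
  rw [val]
  rw [sum_pi_four]
  simp only [sum_pi_four, sum_pi_one, R4H_apply, Fin.sum_univ_two, Fin.prod_univ_four,
    Fin.prod_univ_one, Matrix.cons_val_zero, Matrix.cons_val_one, Matrix.head_cons,
    Matrix.cons_val_two, Matrix.tail_cons, Matrix.cons_val_three]
  norm_num
  set c0 := (starRingEnd ℂ) (φ 0)
  set c1 := (starRingEnd ℂ) (φ 1)
  set S := φ 0 * c0 + φ 1 * c1 with hS
  linear_combination (6/5 * (S^3 + S^2 + S + 1)) * hφ'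

lemma real_ineq (m : ℕ) : ((203:ℝ)/20)^m ≤ ((18:ℝ)/5)^(2*m) := by
  calc ((203:ℝ)/20)^m ≤ (((18:ℝ)/5)^2)^m := by
        refine pow_le_pow_left₀ (by norm_num) (by norm_num) m
    _ = ((18:ℝ)/5)^(2*m) := (pow_mul _ 2 m).symm


/-- For the Bell-dimer state: (i) `A_n = 7^{⌊n/2⌋} 3^{n mod 2}`;
(ii) `B_{n,H} = (29/20)^{⌊n/2⌋} (6/5)^{n mod 2}`; (iii) `A_n · B_{n,H} ≤ (18/5)^n`. -/
theorem bell_dimer_certificate (n : ℕ) (hn : 1 ≤ n) (φ : Fin 2 → ℂ)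
    (hφ : (∑ i, φ i * star (φ i)) = 1) :
    An (pureState (bellDimerVec n φ)) (pureState (bellDimerVec n φ))
      = (7 : ℂ)^(n / 2) * (3 : ℂ)^(n % 2) ∧
    BnH (pureState (bellDimerVec n φ)) (pureState (bellDimerVec n φ))
      = ((29 : ℂ)/20)^(n / 2) * ((6 : ℂ)/5)^(n % 2) ∧
    An (pureState (bellDimerVec n φ)) (pureState (bellDimerVec n φ))
        * BnH (pureState (bellDimerVec n φ)) (pureState (bellDimerVec n φ))
      ≤ ((18 : ℂ)/5)^n := by
  have hA : An (pureState (bellDimerVec n φ)) (pureState (bellDimerVec n φ))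
      = (7 : ℂ)^(n / 2) * (3 : ℂ)^(n % 2) := by
    rcases Nat.mod_two_eq_zero_or_one n with h | h
    · obtain ⟨m, rfl⟩ : ∃ m, n = 2*m := ⟨n/2, by omega⟩
      rw [An_eq_val, val_bell_even, A_pair]
      simp only [show (2*m)/2 = m from by omega, show (2*m)%2 = 0 from by omega,
        pow_zero, mul_one]
    · obtain ⟨m, rfl⟩ : ∃ m, n = 2*m+1 := ⟨n/2, by omega⟩
      rw [An_eq_val, val_bell_odd, A_pair, A_single φ hφ]
      simp only [show (2*m+1)/2 = m from by omega, show (2*m+1)%2 = 1 from by omega,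
        pow_one]
  have hB : BnH (pureState (bellDimerVec n φ)) (pureState (bellDimerVec n φ))
      = ((29 : ℂ)/20)^(n / 2) * ((6 : ℂ)/5)^(n % 2) := by
    rcases Nat.mod_two_eq_zero_or_one n with h | h
    · obtain ⟨m, rfl⟩ : ∃ m, n = 2*m := ⟨n/2, by omega⟩
      rw [BnH_eq_val, val_bell_even, B_pair]
      simp only [show (2*m)/2 = m from by omega, show (2*m)%2 = 0 from by omega,
        pow_zero, mul_one]
    · obtain ⟨m, rfl⟩ : ∃ m, n = 2*m+1 := ⟨n/2, by omega⟩
      rw [BnH_eq_val, val_bell_odd, B_pair, B_single φ hφ]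
      simp only [show (2*m+1)/2 = m from by omega, show (2*m+1)%2 = 1 from by omega,
        pow_one]
  refine ⟨hA, hB, ?_⟩
  rw [hA, hB]
  have key : ∀ m r : ℕ, r ≤ 1 →
      ((7:ℂ)^m * 3^r) * (((29:ℂ)/20)^m * ((6:ℂ)/5)^r) ≤ ((18:ℂ)/5)^(2*m+r) := by
    intro m r hr
    have hc : ((7:ℂ)^m * 3^r) * (((29:ℂ)/20)^m * ((6:ℂ)/5)^r)
        = ((((203:ℝ)/20)^m * ((18:ℝ)/5)^r : ℝ) : ℂ) := by
      push_cast
      rw [show ((203:ℂ)/20) = 7 * (29/20) by norm_num,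
        show ((18:ℂ)/5) = 3 * (6/5) by norm_num, mul_pow, mul_pow]
      ring
    have hc2 : ((18:ℂ)/5)^(2*m+r) = ((((18:ℝ)/5)^(2*m+r) : ℝ) : ℂ) := by
      push_cast
      norm_num
    rw [hc, hc2, Complex.real_le_real]
    rw [pow_add]
    refine mul_le_mul_of_nonneg_right (real_ineq m) (by positivity)
  have := key (n/2) (n%2) (by omega)
  rwa [show 2*(n/2) + n%2 = n from by omega] at this
end
end
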